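/- arXiv:1403.3560 — 4 statements merged into one kernel-verified Lean document; each statement's English description precedes it below -/
import Mathlib

section
/- Global positivity of solutions of the Raychaudhuri constraint (Proposition 2.2(1)): Let κ, S : [0,∞) → ℝ be continuous with S ≥ 0, set H(r) := ∫₀^r κ(s) ds, and assume ∫₀^∞ ( ∫₀^r e^{H(ŝ)} dŝ ) e^{−H(r)} S(r) dr < 2. Assume moreover that there are x₁ > 0 and smooth functions K, Σ on [0,x₁) such that κ(r) = r^{−3} K(1/r) and S(r) = r^{−4} Σ(1/r) for all r > 1/x₁. If φ : [0,∞) → ℝ is twice continuously differentiable with φ(0) = 0, φ'(0) = 1 and φ''(r) − κ(r)φ'(r) + (1/2) S(r) φ(r) = 0 for all r > 0, then φ(r) > 0 for every r > 0, and the limit φ₋₁ := lim_{r→∞} φ(r)/r exists and is strictly positive. -/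
set_option maxHeartbeats 1000000


open Filter MeasureTheory

/-- A function is *smooth on `[0, x₁)`* if it is `C^∞` on some open interval
containing `[0, x₁)`. -/
def SmoothOnIco (K : ℝ → ℝ) (x₁ : ℝ) : Prop :=
  ∃ a b : ℝ, a < 0 ∧ x₁ ≤ b ∧ ContDiffOn ℝ (⊤ : ℕ∞) K (Set.Ioo a b)

/-- Continuity of primitive on `Ici 0` for a function continuous on `Ici 0`. -/
lemma primitive_contOn (f : ℝ → ℝ) (hf : ContinuousOn f (Set.Ici 0)) :
    ContinuousOn (fun r => ∫ s in (0:ℝ)..r, f s) (Set.Ici 0) := by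
  intro x hx
  have hx0 : (0:ℝ) ≤ x := hx
  have hIcc : ContinuousOn (fun r => ∫ s in (0:ℝ)..r, f s) (Set.uIcc 0 (x+1)) := by
    apply intervalIntegral.continuousOn_primitive_interval
    have : Set.uIcc (0:ℝ) (x+1) = Set.Icc 0 (x+1) := by
      rw [Set.uIcc_of_le]; linarith
    rw [this]
    exact (hf.mono (by intro y hy; exact hy.1)).integrableOn_compact isCompact_Icc
  have hmem : Set.uIcc (0:ℝ) (x+1) ∈ nhdsWithin x (Set.Ici 0) := by
    rw [Set.uIcc_of_le (by linarith)]
    apply mem_nhdsWithin.mpr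
    refine ⟨Set.Iio (x+1), isOpen_Iio, by simp, fun y hy => ⟨hy.2, le_of_lt hy.1⟩⟩
  exact (hIcc x (by rw [Set.uIcc_of_le (by linarith)]; exact ⟨hx0, by linarith⟩)).mono_of_mem_nhdsWithin hmem

/-- FTC for right-derivatives on `[a,b] ⊆ [0,∞)`. -/
lemma ftc_right (F F' : ℝ → ℝ) (a b : ℝ) (h0 : 0 ≤ a) (hab : a ≤ b)
    (hFc : ContinuousOn F (Set.Icc a b))
    (hF' : ∀ x, 0 < x → HasDerivAt F (F' x) x)
    (hint : IntervalIntegrable F' volume a b) :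
    ∫ s in a..b, F' s = F b - F a :=
  intervalIntegral.integral_eq_sub_of_hasDeriv_right_of_le hab hFc
    (fun x hx => ((hF' x (lt_of_le_of_lt h0 hx.1)).hasDerivWithinAt)) hint

/-- Cesàro-type lemma: if `φ' → L` at infinity then `φ r / r → L`. -/
lemma tendsto_div_of_hasDerivAt (φ D : ℝ → ℝ)
    (hcont : ContinuousOn φ (Set.Ici 0))
    (hD : ∀ x : ℝ, 0 < x → HasDerivAt φ (D x) x)
    (hDc : ContinuousOn D (Set.Ici 0)) (L : ℝ)
    (hL : Tendsto D atTop (nhds L)) :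
    Tendsto (fun r => φ r / r) atTop (nhds L) := by
  rw [Metric.tendsto_atTop]
  intro ε hε
  obtain ⟨R₀, hR₀⟩ := (Metric.tendsto_atTop.mp hL) (ε/3) (by linarith)
  set R : ℝ := max R₀ 1 with hRdef
  have hR1 : (1:ℝ) ≤ R := le_max_right _ _
  have hRpos : (0:ℝ) < R := lt_of_lt_of_le one_pos hR1
  have hDR : ∀ s, R ≤ s → |D s - L| ≤ ε/3 := by
    intro s hs
    have := hR₀ s (le_trans (le_max_left _ _) hs)
    rw [Real.dist_eq] at this; linarith
  set N : ℝ := max R (1 + 3*|φ R - L*R|/ε) with hNdef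
  refine ⟨N, fun r hr => ?_⟩
  have hrR : R ≤ r := le_trans (le_max_left _ _) hr
  have hrpos : 0 < r := lt_of_lt_of_le hRpos hrR
  have hsub : Set.uIcc R r ⊆ Set.Ici 0 := by
    rw [Set.uIcc_of_le hrR]; exact fun y hy => le_trans hRpos.le hy.1
  have hint1 : IntervalIntegrable D volume R r := (hDc.mono hsub).intervalIntegrable
  have hftc : ∫ s in R..r, D s = φ r - φ R := by
    apply ftc_right φ D R r hRpos.le hrR
    · exact hcont.mono (fun y hy => le_trans hRpos.le hy.1)
    · exact hD
    · exact hint1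
  have hsplit : ∫ s in R..r, (D s - L) = (φ r - φ R) - L*(r-R) := by
    rw [intervalIntegral.integral_sub hint1 intervalIntegrable_const, hftc]
    simp [intervalIntegral.integral_const]
    ring
  have herr : |∫ s in R..r, (D s - L)| ≤ (ε/3) * (r - R) := by
    have habs : |r - R| = r - R := abs_of_nonneg (by linarith)
    have h := intervalIntegral.norm_integral_le_of_norm_le_const
      (C := ε/3) (f := fun s => D s - L) (a := R) (b := r) ?_
    · rw [habs] at h; simpa [Real.norm_eq_abs] using h
    · intro x hx
      rw [Set.uIoc_of_le hrR] at hx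
      simpa [Real.norm_eq_abs] using hDR x hx.1.le
  rw [Real.dist_eq]
  have key : φ r / r - L = (φ R - L*R)/r + (∫ s in R..r, (D s - L))/r := by
    field_simp
    linarith [hsplit]
  rw [key]
  have hN : 1 + 3*|φ R - L*R|/ε ≤ N := le_max_right _ _
  have hc2 : 3*|φ R - L*R| ≤ (N-1)*ε := by
    rw [← div_le_iff₀ hε]; linarith
  calc |(φ R - L*R)/r + (∫ s in R..r, (D s - L))/r|
      ≤ |(φ R - L*R)/r| + |(∫ s in R..r, (D s - L))/r| := abs_add_le _ _
    _ = |φ R - L*R|/r + |∫ s in R..r, (D s - L)|/r := by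
        rw [abs_div, abs_div, abs_of_pos hrpos]
    _ < ε := by
        rw [← add_div, div_lt_iff₀ hrpos]
        have hNr : N ≤ r := hr
        nlinarith [abs_nonneg (φ R - L*R), mul_pos hε hrpos]

/-- Proposition 2.2(1): global positivity of solutions of the Raychaudhuri constraint
`φ'' − κφ' + (1/2)Sφ = 0` with `φ(0)=0`, `φ'(0)=1`, under the smallness condition on the
integral and the asymptotic gauge conditions `κ = O(r⁻³)`, `S = O(r⁻⁴)`. -/
theorem raychaudhuri_global_positivity
    (κ S : ℝ → ℝ)
    (hκc : ContinuousOn κ (Set.Ici 0)) (hSc : ContinuousOn S (Set.Ici 0))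
    (hSnonneg : ∀ r ∈ Set.Ici (0:ℝ), 0 ≤ S r)
    (H : ℝ → ℝ) (hH : ∀ r, H r = ∫ s in (0:ℝ)..r, κ s)
    (hsmall : (∫ r in Set.Ioi (0:ℝ),
        (∫ s in (0:ℝ)..r, Real.exp (H s)) * Real.exp (-(H r)) * S r) < 2)
    (x₁ : ℝ) (hx₁ : 0 < x₁) (K Sig : ℝ → ℝ)
    (hK : SmoothOnIco K x₁) (hSig : SmoothOnIco Sig x₁)
    (hκa : ∀ r : ℝ, 1 / x₁ < r → κ r = K (1 / r) / r ^ 3)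
    (hSa : ∀ r : ℝ, 1 / x₁ < r → S r = Sig (1 / r) / r ^ 4)
    (φ : ℝ → ℝ) (hφ : ContDiffOn ℝ 2 φ (Set.Ici 0))
    (hφ0 : φ 0 = 0) (hφ'0 : derivWithin φ (Set.Ici 0) 0 = 1)
    (hode : ∀ r : ℝ, 0 < r →
      deriv (deriv φ) r - κ r * deriv φ r + (1 / 2) * S r * φ r = 0) :
    (∀ r : ℝ, 0 < r → 0 < φ r) ∧
      ∃ L : ℝ, 0 < L ∧ Tendsto (fun r => φ r / r) atTop (nhds L) := by
  obtain ⟨aK, bK, haK, hbK, hKsm⟩ := hK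
  obtain ⟨aS, bS, haS, hbS, hSsm⟩ := hSig
  set D : ℝ → ℝ := derivWithin φ (Set.Ici 0) with hDdef
  set g : ℝ → ℝ := fun r => Real.exp (-(H r)) * D r with hgdef
  set y : ℝ → ℝ := fun r => ∫ s in (0:ℝ)..r, Real.exp (H s) with hydef
  set f : ℝ → ℝ := fun r => y r * Real.exp (-(H r)) * S r with hfdef
  have hφcont : ContinuousOn φ (Set.Ici 0) := hφ.continuousOn
  have hDcont : ContinuousOn D (Set.Ici 0) :=
    hφ.continuousOn_derivWithin (uniqueDiffOn_Ici 0) one_le_two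
  have hDeq : ∀ x : ℝ, 0 < x → D x = deriv φ x := fun x hx =>
    derivWithin_of_mem_nhds (Ici_mem_nhds hx)
  have hD : ∀ x : ℝ, 0 < x → HasDerivAt φ (D x) x := by
    intro x hx
    have h1 : DifferentiableAt ℝ φ x :=
      ((hφ.differentiableOn two_ne_zero) x (le_of_lt hx)).differentiableAt (Ici_mem_nhds hx)
    exact (hDeq x hx) ▸ h1.hasDerivAt
  have hD' : ∀ x : ℝ, 0 < x → HasDerivAt D (κ x * D x - (1/2) * S x * φ x) x := by
    intro x hx
    have hct : ContDiffAt ℝ 2 φ x := hφ.contDiffAt (Ici_mem_nhds hx)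
    obtain ⟨u, hu, hu2⟩ := hct.contDiffOn (le_refl 2) (by norm_num)
    have hxv : x ∈ interior u := mem_interior_iff_mem_nhds.mpr hu
    have hv : ContDiffOn ℝ 2 φ (interior u) := hu2.mono interior_subset
    have hv2 : ContDiffOn ℝ ((1:ℕ) + 1) φ (interior u) := by
      convert hv using 2
      norm_num
    obtain ⟨-, -, hderiv1⟩ := (contDiffOn_succ_iff_deriv_of_isOpen isOpen_interior).mp hv2
    have h2 : DifferentiableAt ℝ (deriv φ) x :=
      ((hderiv1.differentiableOn (by simp)) x hxv).differentiableAt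
        (isOpen_interior.mem_nhds hxv)
    have h3 : HasDerivAt (deriv φ) (deriv (deriv φ) x) x := h2.hasDerivAt
    have h4 : HasDerivAt D (deriv (deriv φ) x) x := by
      apply h3.congr_of_eventuallyEq
      filter_upwards [Ioi_mem_nhds hx] with s hs
      exact hDeq s hs
    have hval : deriv (deriv φ) x = κ x * D x - 1/2 * S x * φ x := by
      have hο := hode x hx
      rw [hDeq x hx]
      linarith
    exact hval ▸ h4
  have hHderiv : ∀ x : ℝ, 0 < x → HasDerivAt H (κ x) x := by
    intro x hx
    have hint : IntervalIntegrable κ volume 0 x := by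
      apply ContinuousOn.intervalIntegrable
      apply hκc.mono
      rw [Set.uIcc_of_le hx.le]
      exact fun z hz => hz.1
    have hmeas : StronglyMeasurableAtFilter κ (nhds x) volume :=
      (hκc.mono (Set.Ioi_subset_Ici_self)).stronglyMeasurableAtFilter isOpen_Ioi x hx
    have hcat : ContinuousAt κ x := (hκc x hx.le).continuousAt (Ici_mem_nhds hx)
    have := intervalIntegral.integral_hasDerivAt_right hint hmeas hcat
    exact this.congr_of_eventuallyEq (Eventually.of_forall fun r => hH r)
  have hHcont : ContinuousOn H (Set.Ici 0) :=
    (primitive_contOn κ hκc).congr (fun r _ => hH r)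
  have hgcont : ContinuousOn g (Set.Ici 0) :=
    ((Real.continuous_exp.comp_continuousOn hHcont.neg)).mul hDcont
  have hH0 : H 0 = 0 := by rw [hH 0, intervalIntegral.integral_same]
  have hg0 : g 0 = 1 := by simp [hgdef, hH0, hφ'0]
  have hg' : ∀ x : ℝ, 0 < x →
      HasDerivAt g (-(1/2) * S x * φ x * Real.exp (-(H x))) x := by
    intro x hx
    have h1 : HasDerivAt (fun r => Real.exp (-(H r)))
        (Real.exp (-(H x)) * (-(κ x))) x := ((hHderiv x hx).neg).exp
    have h2 : HasDerivAt g _ x := h1.mul (hD' x hx)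
    convert h2 using 1
    ring
  have hIccsub : ∀ a b : ℝ, 0 ≤ a → Set.Icc a b ⊆ Set.Ici 0 :=
    fun a b ha z hz => le_trans ha hz.1
  have huIccsub : ∀ a b : ℝ, 0 ≤ a → a ≤ b → Set.uIcc a b ⊆ Set.Ici 0 := by
    intro a b ha hab
    rw [Set.uIcc_of_le hab]
    exact hIccsub a b ha
  have hG'cont : ContinuousOn (fun s => -(1/2) * S s * φ s * Real.exp (-(H s)))
      (Set.Ici 0) :=
    ((continuousOn_const.mul hSc).mul hφcont).mul
      (Real.continuous_exp.comp_continuousOn hHcont.neg)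
  have hgFTC : ∀ a b : ℝ, 0 ≤ a → a ≤ b →
      g b - g a = ∫ s in a..b, (-(1/2) * S s * φ s * Real.exp (-(H s))) := by
    intro a b ha hab
    exact (ftc_right g _ a b ha hab (hgcont.mono (hIccsub a b ha)) hg'
      ((hG'cont.mono (huIccsub a b ha hab)).intervalIntegrable)).symm
  have hφFTC : ∀ b : ℝ, 0 ≤ b → φ b = ∫ s in (0:ℝ)..b, D s := by
    intro b hb
    have h := ftc_right φ D 0 b le_rfl hb (hφcont.mono (hIccsub 0 b le_rfl)) hD
      ((hDcont.mono (huIccsub 0 b le_rfl hb)).intervalIntegrable)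
    rw [h, hφ0, sub_zero]
  -- the constants R, CK, CS and boundedness of H
  have hx₁2 : (0:ℝ) < x₁/2 := by linarith
  set R : ℝ := max 1 (2/x₁) with hRdef
  have hR1 : (1:ℝ) ≤ R := le_max_left _ _
  have hRpos : (0:ℝ) < R := lt_of_lt_of_le one_pos hR1
  have hRx : 2/x₁ ≤ R := le_max_right _ _
  have hinvmem : ∀ r : ℝ, R ≤ r → 1/x₁ < r ∧ (1/r) ∈ Set.Icc (0:ℝ) (x₁/2) := by
    intro r hr
    have hrpos : 0 < r := lt_of_lt_of_le hRpos hr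
    have h12 : 1/x₁ < 2/x₁ := by
      rw [div_lt_div_iff₀ hx₁ hx₁]; nlinarith
    have h2 : 2 ≤ r * x₁ := by
      have := (div_le_iff₀ hx₁).mp (le_trans hRx hr)
      linarith
    refine ⟨by linarith, by positivity, ?_⟩
    rw [div_le_div_iff₀ hrpos (by norm_num : (0:ℝ) < 2)]
    nlinarith
  obtain ⟨CK₀, hCK₀⟩ := isCompact_Icc.exists_bound_of_continuousOn
    (hKsm.continuousOn.mono (fun z hz =>
      ⟨lt_of_lt_of_le haK hz.1, lt_of_le_of_lt hz.2 (lt_of_lt_of_le (by linarith) hbK)⟩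
        : Set.Icc (0:ℝ) (x₁/2) ⊆ Set.Ioo aK bK))
  obtain ⟨CS₀, hCS₀⟩ := isCompact_Icc.exists_bound_of_continuousOn
    (hSsm.continuousOn.mono (fun z hz =>
      ⟨lt_of_lt_of_le haS hz.1, lt_of_le_of_lt hz.2 (lt_of_lt_of_le (by linarith) hbS)⟩
        : Set.Icc (0:ℝ) (x₁/2) ⊆ Set.Ioo aS bS))
  set CK : ℝ := max CK₀ 0 with hCKdef
  set CS : ℝ := max CS₀ 0 with hCSdef
  have hCKnn : 0 ≤ CK := le_max_right _ _
  have hCSnn : 0 ≤ CS := le_max_right _ _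
  have hκbound : ∀ r : ℝ, R ≤ r → |κ r| ≤ CK / r^3 := by
    intro r hr
    have hrpos : 0 < r := lt_of_lt_of_le hRpos hr
    obtain ⟨h1, h2⟩ := hinvmem r hr
    have hKb : |K (1/r)| ≤ CK := by
      have h3 := hCK₀ (1/r) h2
      rw [Real.norm_eq_abs] at h3
      exact h3.trans (le_max_left _ _)
    rw [hκa r h1, abs_div, abs_of_pos (by positivity : (0:ℝ) < r^3)]
    gcongr
  have hSbound : ∀ r : ℝ, R ≤ r → S r ≤ CS / r^4 := by
    intro r hr
    have hrpos : 0 < r := lt_of_lt_of_le hRpos hr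
    obtain ⟨h1, h2⟩ := hinvmem r hr
    have hSb : |Sig (1/r)| ≤ CS := by
      have h3 := hCS₀ (1/r) h2
      rw [Real.norm_eq_abs] at h3
      exact h3.trans (le_max_left _ _)
    rw [hSa r h1]
    calc Sig (1/r) / r^4 ≤ |Sig (1/r)| / r^4 := by
          gcongr; exact le_abs_self _
      _ ≤ CS / r^4 := by gcongr
  -- integrability of κ on (R, ∞)
  have hrpow3 : IntegrableOn (fun r : ℝ => r ^ (-3:ℝ)) (Set.Ioi R) volume :=
    integrableOn_Ioi_rpow_of_lt (by norm_num) hRpos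
  have hrpowval : ∀ r : ℝ, 0 < r → r ^ (-3:ℝ) = (r^3)⁻¹ := by
    intro r hr
    rw [show (-3:ℝ) = -((3:ℕ):ℝ) by norm_num, Real.rpow_neg hr.le, Real.rpow_natCast]
  have hκIoi : IntegrableOn κ (Set.Ioi R) volume := by
    apply Integrable.mono' ((hrpow3.const_mul CK) :
      IntegrableOn (fun r : ℝ => CK * r ^ (-3:ℝ)) (Set.Ioi R) volume)
    · exact (hκc.mono (fun z hz => le_trans hRpos.le (le_of_lt hz))).aestronglyMeasurable
        measurableSet_Ioi
    · rw [ae_restrict_iff' measurableSet_Ioi]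
      apply Eventually.of_forall
      intro r hr
      have hrpos : 0 < r := lt_trans hRpos hr
      rw [Real.norm_eq_abs, hrpowval r hrpos]
      have := hκbound r (le_of_lt hr)
      rw [div_eq_mul_inv] at this
      exact this
  -- boundedness of H
  obtain ⟨M₀, hM₀⟩ := isCompact_Icc.exists_bound_of_continuousOn
    (hHcont.mono (hIccsub 0 R le_rfl))
  set J : ℝ := ∫ s in Set.Ioi R, |κ s| with hJdef
  have hJ0 : 0 ≤ J := setIntegral_nonneg measurableSet_Ioi (fun s _ => abs_nonneg _)
  have hHR : ∀ r : ℝ, R ≤ r → |H r - H R| ≤ J := by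
    intro r hr
    have hint1 : IntervalIntegrable κ volume 0 r :=
      (hκc.mono (huIccsub 0 r le_rfl (le_trans hRpos.le hr))).intervalIntegrable
    have hint2 : IntervalIntegrable κ volume 0 R :=
      (hκc.mono (huIccsub 0 R le_rfl hRpos.le)).intervalIntegrable
    have heq : H r - H R = ∫ s in R..r, κ s := by
      rw [hH r, hH R]
      exact intervalIntegral.integral_interval_sub_left hint1 hint2
    rw [heq]
    have h1 : |∫ s in R..r, κ s| ≤ ∫ s in R..r, |κ s| :=
      intervalIntegral.abs_integral_le_integral_abs hr
    have h2 : (∫ s in R..r, |κ s|) ≤ J := by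
      rw [intervalIntegral.integral_of_le hr, hJdef]
      apply setIntegral_mono_set hκIoi.abs
      · exact Eventually.of_forall (fun s => by simpa using abs_nonneg (κ s))
      · exact HasSubset.Subset.eventuallyLE Set.Ioc_subset_Ioi_self
    linarith
  set M : ℝ := max M₀ 0 + J with hMdef
  have hHbdd : ∀ r : ℝ, 0 ≤ r → |H r| ≤ M := by
    intro r hr
    rcases le_or_gt r R with h | h
    · have h1 := hM₀ r ⟨hr, h⟩
      rw [Real.norm_eq_abs] at h1
      have := le_max_left M₀ 0
      rw [hMdef]; linarith
    · have h1 := hHR r h.le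
      have h2 := hM₀ R ⟨hRpos.le, le_refl R⟩
      rw [Real.norm_eq_abs] at h2
      have h3 : |H r| ≤ |H R| + |H r - H R| := by
        have := abs_add_le (H R) (H r - H R)
        simpa using this
      have := le_max_left M₀ 0
      rw [hMdef]; linarith
  have hexpM : ∀ r : ℝ, 0 ≤ r → Real.exp (H r) ≤ Real.exp M :=
    fun r hr => Real.exp_le_exp.mpr (le_trans (le_abs_self _) (hHbdd r hr))
  have hexpMneg : ∀ r : ℝ, 0 ≤ r → Real.exp (-(H r)) ≤ Real.exp M :=
    fun r hr => Real.exp_le_exp.mpr (le_trans (neg_le_abs _) (hHbdd r hr))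
  have hEcont : ContinuousOn (fun s => Real.exp (H s)) (Set.Ici 0) :=
    Real.continuous_exp.comp_continuousOn hHcont
  have hycont : ContinuousOn y (Set.Ici 0) := primitive_contOn _ hEcont
  have hy_le : ∀ r : ℝ, 0 ≤ r → y r ≤ Real.exp M * r := by
    intro r hr
    have h1 : y r ≤ ∫ _ in (0:ℝ)..r, Real.exp M := by
      apply intervalIntegral.integral_mono_on hr
      · exact (hEcont.mono (huIccsub 0 r le_rfl hr)).intervalIntegrable
      · exact intervalIntegrable_const
      · exact fun s hs => hexpM s hs.1
    simpa [mul_comm] using h1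
  have hy_nonneg : ∀ r : ℝ, 0 ≤ r → 0 ≤ y r := by
    intro r hr
    apply intervalIntegral.integral_nonneg hr
    exact fun s _ => (Real.exp_pos _).le
  have hfcont : ContinuousOn f (Set.Ici 0) :=
    (hycont.mul (Real.continuous_exp.comp_continuousOn hHcont.neg)).mul hSc
  have hfnonneg : ∀ r : ℝ, 0 ≤ r → 0 ≤ f r := by
    intro r hr
    exact mul_nonneg (mul_nonneg (hy_nonneg r hr) (Real.exp_pos _).le) (hSnonneg r hr)
  have hfIoi : IntegrableOn f (Set.Ioi 0) volume := by
    have h1 : IntegrableOn f (Set.Ioc 0 R) volume :=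
      ((hfcont.mono (hIccsub 0 R le_rfl)).integrableOn_compact isCompact_Icc).mono_set
        Set.Ioc_subset_Icc_self
    have h2 : IntegrableOn f (Set.Ioi R) volume := by
      apply Integrable.mono' ((hrpow3.const_mul (Real.exp M * Real.exp M * CS)) :
        IntegrableOn (fun r : ℝ => (Real.exp M * Real.exp M * CS) * r ^ (-3:ℝ))
          (Set.Ioi R) volume)
      · exact (hfcont.mono (fun z hz => le_trans hRpos.le (le_of_lt hz))).aestronglyMeasurable
          measurableSet_Ioi
      · rw [ae_restrict_iff' measurableSet_Ioi]
        apply Eventually.of_forall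
        intro r hr
        have hrpos : 0 < r := lt_trans hRpos hr
        have hr0 : (0:ℝ) ≤ r := hrpos.le
        rw [Real.norm_eq_abs, abs_of_nonneg (hfnonneg r hr0), hrpowval r hrpos]
        have hb1 : y r * Real.exp (-(H r)) * S r ≤
            (Real.exp M * r) * Real.exp M * (CS / r^4) := by
          apply mul_le_mul
          · apply mul_le_mul (hy_le r hr0) (hexpMneg r hr0) (Real.exp_pos _).le
            positivity
          · exact hSbound r hr.le
          · exact hSnonneg r hr0
          · positivity
        have heq2 : (Real.exp M * r) * Real.exp M * (CS / r^4) =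
            (Real.exp M * Real.exp M * CS) * (r^3)⁻¹ := by
          field_simp
        calc f r ≤ (Real.exp M * r) * Real.exp M * (CS / r^4) := hb1
          _ = (Real.exp M * Real.exp M * CS) * (r^3)⁻¹ := heq2
    have : Set.Ioi (0:ℝ) ⊆ Set.Ioc 0 R ∪ Set.Ioi R := by
      intro z hz
      rcases le_or_gt z R with h | h
      · exact Or.inl ⟨hz, h⟩
      · exact Or.inr h
    exact (h1.union h2).mono_set this
  set I : ℝ := ∫ r in Set.Ioi (0:ℝ), f r with hIdef
  have hIlt : I < 2 := hsmall
  have hIb : ∀ b : ℝ, 0 ≤ b → (∫ s in (0:ℝ)..b, f s) ≤ I := by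
    intro b hb
    rw [intervalIntegral.integral_of_le hb, hIdef]
    apply setIntegral_mono_set hfIoi
    · refine (ae_restrict_iff' measurableSet_Ioi).mpr ?_
      exact Eventually.of_forall (fun s hs => by simpa using hfnonneg s hs.le)
    · exact HasSubset.Subset.eventuallyLE Set.Ioc_subset_Ioi_self
  -- the key estimates under nonnegativity of φ
  have key : ∀ b : ℝ, 0 ≤ b → (∀ s, 0 ≤ s → s ≤ b → 0 ≤ φ s) →
      (1 - I/2 ≤ g b ∧ ∀ x, 0 ≤ x → x ≤ b → g b ≤ g x) := by
    intro b hb hφnn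
    have hG'nonpos : ∀ u, 0 ≤ u → u ≤ b →
        -(1/2) * S u * φ u * Real.exp (-(H u)) ≤ 0 := by
      intro u hu0 hub
      have h1 : 0 ≤ S u := hSnonneg u hu0
      have h2 : 0 ≤ φ u := hφnn u hu0 hub
      have h3 : (0:ℝ) ≤ Real.exp (-(H u)) := (Real.exp_pos _).le
      nlinarith [mul_nonneg (mul_nonneg h1 h2) h3]
    have hmono : ∀ x, 0 ≤ x → x ≤ b → g b ≤ g x := by
      intro x hx0 hxb
      have h1 := hgFTC x b hx0 hxb
      have h2 : (∫ s in x..b, (-(1/2) * S s * φ s * Real.exp (-(H s)))) ≤ 0 := by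
        have := intervalIntegral.integral_mono_on hxb
          ((hG'cont.mono (huIccsub x b hx0 hxb)).intervalIntegrable)
          (intervalIntegrable_const : IntervalIntegrable (fun _ => (0:ℝ)) volume x b)
          (fun u hu => hG'nonpos u (le_trans hx0 hu.1) hu.2)
        simpa using this
      linarith
    have hg_le_one : ∀ x, 0 ≤ x → x ≤ b → g x ≤ 1 := by
      intro x hx0 hxb
      have h1 := hgFTC 0 x le_rfl hx0
      have h2 : (∫ s in (0:ℝ)..x, (-(1/2) * S s * φ s * Real.exp (-(H s)))) ≤ 0 := by
        have := intervalIntegral.integral_mono_on hx0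
          ((hG'cont.mono (huIccsub 0 x le_rfl hx0)).intervalIntegrable)
          (intervalIntegrable_const : IntervalIntegrable (fun _ => (0:ℝ)) volume 0 x)
          (fun u hu => hG'nonpos u hu.1 (le_trans hu.2 hxb))
        simpa using this
      rw [hg0] at h1
      linarith
    have hD_le : ∀ x, 0 ≤ x → x ≤ b → D x ≤ Real.exp (H x) := by
      intro x hx0 hxb
      have h1 := hg_le_one x hx0 hxb
      have h2 : Real.exp (H x) * (Real.exp (-(H x)) * D x) ≤ Real.exp (H x) * 1 :=
        mul_le_mul_of_nonneg_left h1 (Real.exp_pos _).le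
      rwa [← mul_assoc, ← Real.exp_add, add_neg_cancel, Real.exp_zero, one_mul,
        mul_one] at h2
    have hφ_le_y : ∀ u, 0 ≤ u → u ≤ b → φ u ≤ y u := by
      intro u hu0 hub
      rw [hφFTC u hu0]
      apply intervalIntegral.integral_mono_on hu0
        ((hDcont.mono (huIccsub 0 u le_rfl hu0)).intervalIntegrable)
        ((hEcont.mono (huIccsub 0 u le_rfl hu0)).intervalIntegrable)
        (fun s hs => hD_le s hs.1 (le_trans hs.2 hub))
    have hlow : 1 - I/2 ≤ g b := by
      have h1 := hgFTC 0 b le_rfl hb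
      rw [hg0] at h1
      have h2 : (∫ s in (0:ℝ)..b, (-(1/2) * f s)) ≤
          ∫ s in (0:ℝ)..b, (-(1/2) * S s * φ s * Real.exp (-(H s))) := by
        apply intervalIntegral.integral_mono_on hb
          (((hfcont.mono (huIccsub 0 b le_rfl hb)).intervalIntegrable).const_mul _)
          ((hG'cont.mono (huIccsub 0 b le_rfl hb)).intervalIntegrable)
        intro u hu
        have h3 : 0 ≤ S u := hSnonneg u hu.1
        have h4 : (0:ℝ) ≤ Real.exp (-(H u)) := (Real.exp_pos _).le
        have h5 : φ u ≤ y u := hφ_le_y u hu.1 hu.2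
        have h6 : 0 ≤ (y u - φ u) * (S u * Real.exp (-(H u))) :=
          mul_nonneg (by linarith) (mul_nonneg h3 h4)
        show -(1/2) * (y u * Real.exp (-(H u)) * S u) ≤
          -(1/2) * S u * φ u * Real.exp (-(H u))
        nlinarith
      have h7 : (∫ s in (0:ℝ)..b, (-(1/2) * f s)) = -(1/2) * ∫ s in (0:ℝ)..b, f s := by
        exact intervalIntegral.integral_const_mul _ _
      have h8 := hIb b hb
      have h9 : -(1/2) * (∫ s in (0:ℝ)..b, f s) ≥ -(1/2) * I := by nlinarith
      rw [h7] at h2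
      linarith
    exact ⟨hlow, hmono⟩
  -- φ is positive immediately to the right of 0
  have hc₀pos : 0 < 1 - I/2 := by linarith
  have hδex : ∃ δ > 0, ∀ s, 0 < s → s < δ → 0 < φ s := by
    have hdiff : DifferentiableWithinAt ℝ φ (Set.Ici 0) 0 :=
      (hφ.differentiableOn two_ne_zero) 0 Set.self_mem_Ici
    have hder : HasDerivWithinAt φ (D 0) (Set.Ici 0) 0 := hdiff.hasDerivWithinAt
    rw [hφ'0] at hder
    have hslope : Tendsto (slope φ 0) (nhdsWithin 0 (Set.Ioi 0)) (nhds 1) := by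
      have := hasDerivWithinAt_iff_tendsto_slope.mp hder
      rwa [Set.Ici_sdiff_left] at this
    have hev : ∀ᶠ s in nhdsWithin 0 (Set.Ioi 0), (1:ℝ)/2 < slope φ 0 s :=
      hslope.eventually (eventually_gt_nhds (by norm_num))
    obtain ⟨δ, hδmem, hδsub⟩ := mem_nhdsGT_iff_exists_Ioo_subset.mp hev
    refine ⟨δ, hδmem, fun s hs0 hsδ => ?_⟩
    have h2 : (1:ℝ)/2 < slope φ 0 s := hδsub ⟨hs0, hsδ⟩
    rw [slope_def_field, hφ0, sub_zero, sub_zero] at h2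
    have h3 := (lt_div_iff₀ hs0).mp h2
    linarith
  -- global positivity
  have hpos : ∀ r : ℝ, 0 < r → 0 < φ r := by
    by_contra hcon
    push_neg at hcon
    obtain ⟨r₁, hr₁pos, hr₁⟩ := hcon
    obtain ⟨δ, hδpos, hδ⟩ := hδex
    set A : Set ℝ := {r | 0 < r ∧ φ r ≤ 0} with hAdef
    have hA_ne : A.Nonempty := ⟨r₁, hr₁pos, hr₁⟩
    have hA_bdd : BddBelow A := ⟨0, fun a ha => ha.1.le⟩
    set r₀ : ℝ := sInf A with hr₀def
    have hr₀_lb : δ ≤ r₀ := le_csInf hA_ne (fun a ha => by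
      by_contra hlt
      push_neg at hlt
      exact absurd ha.2 (not_le.mpr (hδ a ha.1 hlt)))
    have hr₀pos : 0 < r₀ := lt_of_lt_of_le hδpos hr₀_lb
    have hcontAt : ContinuousAt φ r₀ :=
      (hφcont r₀ hr₀pos.le).continuousAt (Ici_mem_nhds hr₀pos)
    have hφlt : ∀ s, 0 < s → s < r₀ → 0 < φ s := by
      intro s hs0 hsr
      by_contra hneg
      push_neg at hneg
      exact absurd (csInf_le hA_bdd (⟨hs0, hneg⟩ : s ∈ A)) (not_le.mpr hsr)
    have hφr₀_le : φ r₀ ≤ 0 := by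
      by_contra hgt
      push_neg at hgt
      have hev : ∀ᶠ s in nhds r₀, 0 < φ s :=
        hcontAt.eventually (eventually_gt_nhds hgt)
      obtain ⟨η, hη, hball⟩ := Metric.eventually_nhds_iff.mp hev
      obtain ⟨a, haA, halt⟩ := (csInf_lt_iff hA_bdd hA_ne).mp
        (show sInf A < r₀ + η by rw [← hr₀def]; linarith)
      have hge : r₀ ≤ a := csInf_le hA_bdd haA
      have : 0 < φ a := hball (by rw [Real.dist_eq, abs_lt]; constructor <;> linarith)
      exact absurd haA.2 (not_le.mpr this)
    have hφr₀_ge : 0 ≤ φ r₀ := by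
      by_contra hneg
      push_neg at hneg
      have hev : ∀ᶠ s in nhds r₀, φ s < 0 :=
        hcontAt.eventually (eventually_lt_nhds hneg)
      obtain ⟨η, hη, hball⟩ := Metric.eventually_nhds_iff.mp hev
      set s : ℝ := max (r₀ - η/2) (r₀/2) with hsdef
      have hs0 : 0 < s := lt_of_lt_of_le (by linarith) (le_max_right _ _)
      have hsr : s < r₀ := by
        apply max_lt <;> linarith
      have hsd : dist s r₀ < η := by
        rw [Real.dist_eq, abs_lt]
        constructor
        · have := le_max_left (r₀ - η/2) (r₀/2); linarith
        · linarith
      exact absurd (hball hsd) (not_lt.mpr (hφlt s hs0 hsr).le)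
    have hφnn : ∀ s, 0 ≤ s → s ≤ r₀ → 0 ≤ φ s := by
      intro s hs0 hsr
      rcases eq_or_lt_of_le hs0 with h | h
      · rw [← h, hφ0]
      rcases eq_or_lt_of_le hsr with h2 | h2
      · rw [h2]; exact hφr₀_ge
      · exact (hφlt s h h2).le
    obtain ⟨hlow, hmono⟩ := key r₀ hr₀pos.le hφnn
    have hDpos : ∀ x, 0 < x → x < r₀ → 0 < deriv φ x := by
      intro x hx0 hxr
      have h1 : 1 - I/2 ≤ g x := le_trans hlow (hmono x hx0.le hxr.le)
      have h2 : 0 < g x := lt_of_lt_of_le hc₀pos h1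
      have h3 : 0 < Real.exp (-(H x)) * D x := h2
      have h4 : 0 < D x := by
        by_contra hh
        push_neg at hh
        nlinarith [Real.exp_pos (-(H x))]
      rwa [← hDeq x hx0]
    have hsm : StrictMonoOn φ (Set.Icc 0 r₀) := by
      apply strictMonoOn_of_deriv_pos (convex_Icc 0 r₀)
        (hφcont.mono (hIccsub 0 r₀ le_rfl))
      intro x hx
      rw [interior_Icc] at hx
      exact hDpos x hx.1 hx.2
    have : φ 0 < φ r₀ := hsm ⟨le_rfl, hr₀pos.le⟩ ⟨hr₀pos.le, le_rfl⟩ hr₀pos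
    rw [hφ0] at this
    exact absurd hφr₀_le (not_le.mpr this)
  -- the limit
  have hφnn_all : ∀ b : ℝ, 0 ≤ b → ∀ s, 0 ≤ s → s ≤ b → 0 ≤ φ s := by
    intro b _ s hs0 _
    rcases eq_or_lt_of_le hs0 with h | h
    · rw [← h, hφ0]
    · exact (hpos s h).le
  have hglow : ∀ b : ℝ, 0 ≤ b → 1 - I/2 ≤ g b :=
    fun b hb => (key b hb (hφnn_all b hb)).1
  have hganti : ∀ a b : ℝ, 0 ≤ a → a ≤ b → g b ≤ g a :=
    fun a b ha hab =>
      (key b (le_trans ha hab) (hφnn_all b (le_trans ha hab))).2 a ha hab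
  set G : ℝ → ℝ := fun r => g (max r 0) with hGdef
  have hGanti : Antitone G := fun u v huv =>
    hganti (max u 0) (max v 0) (le_max_right _ _) (max_le_max huv le_rfl)
  have hGbdd : BddBelow (Set.range G) := by
    refine ⟨1 - I/2, ?_⟩
    rintro z ⟨u, rfl⟩
    exact hglow _ (le_max_right _ _)
  have hGtend : Tendsto G atTop (nhds (⨅ u, G u)) := tendsto_atTop_ciInf hGanti hGbdd
  have hc_pos : 0 < ⨅ u, G u :=
    lt_of_lt_of_le hc₀pos (le_ciInf fun u => hglow _ (le_max_right _ _))
  have hgtend : Tendsto g atTop (nhds (⨅ u, G u)) := by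
    apply hGtend.congr'
    filter_upwards [eventually_ge_atTop (0:ℝ)] with r hr
    rw [hGdef]
    simp only [max_eq_left hr]
  have hHtend : Tendsto H atTop (nhds (H R + ∫ s in Set.Ioi R, κ s)) := by
    have h1 : Tendsto (fun r => ∫ s in R..r, κ s) atTop
        (nhds (∫ s in Set.Ioi R, κ s)) :=
      intervalIntegral_tendsto_integral_Ioi R hκIoi tendsto_id
    have h2 := h1.const_add (H R)
    apply h2.congr'
    filter_upwards [eventually_ge_atTop R] with r hr
    have hint1 : IntervalIntegrable κ volume 0 R :=
      (hκc.mono (huIccsub 0 R le_rfl hRpos.le)).intervalIntegrable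
    have hint2 : IntervalIntegrable κ volume R r :=
      (hκc.mono (by
        rw [Set.uIcc_of_le hr]
        exact fun z hz => le_trans hRpos.le hz.1)).intervalIntegrable
    rw [hH r, hH R, ← intervalIntegral.integral_add_adjacent_intervals hint1 hint2]
  have hDtend : Tendsto D atTop
      (nhds (Real.exp (H R + ∫ s in Set.Ioi R, κ s) * ⨅ u, G u)) := by
    have hE : Tendsto (fun r => Real.exp (H r)) atTop
        (nhds (Real.exp (H R + ∫ s in Set.Ioi R, κ s))) :=
      (Real.continuous_exp.tendsto _).comp hHtend
    apply (hE.mul hgtend).congr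
    intro r
    show Real.exp (H r) * (Real.exp (-(H r)) * D r) = D r
    rw [← mul_assoc, ← Real.exp_add, add_neg_cancel, Real.exp_zero, one_mul]
  refine ⟨hpos, Real.exp (H R + ∫ s in Set.Ioi R, κ s) * ⨅ u, G u,
    mul_pos (Real.exp_pos _) hc_pos, ?_⟩
  exact tendsto_div_of_hasDerivAt φ D hφcont hD hDcont _ hDtend
end

section
/- A priori estimate for Fuchsian systems with flat source (estimate (B.29)): Let n ≥ 1, x₀ > 0, let h₀ be a real n×n matrix, and let h : (0,x₀) → Mat(n×n, ℝ) be continuous with ‖h(x) − h₀‖ ≤ L·x for all x ∈ (0,x₀) and some constant L ≥ 0. Let δg : (0,x₀) → ℝⁿ be flat at 0, i.e. for every N ∈ ℕ there is c_N > 0 with ‖δg(x)‖ ≤ c_N x^N for all x ∈ (0,x₀). Set μ := 1 + 2‖h₀‖, where ‖h₀‖ is the operator norm. If δf : (0,x₀) → ℝⁿ is differentiable and satisfies x·δf'(x) + h(x)·δf(x) = δg(x) on (0,x₀), then for every x₁ ∈ (0,x₀) there exists c > 0 such that ‖δf(x)‖ ≤ c·x^{−μ/2} for all x ∈ (0,x₁].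 -/
set_option maxHeartbeats 1000000

open Real Set

local notation "⟪" x ", " y "⟫" => @inner ℝ _ _ x y

/-- A priori estimate (B.29) for Fuchsian systems with flat source.  If
`x·δf' + h·δf = δg` on `(0,x₀)`, where `‖h(x) − h₀‖ ≤ L·x` and `δg` is flat at `0`,
then with `μ := 1 + 2‖h₀‖` one has `‖δf(x)‖ ≤ c·x^{−μ/2}` on every `(0, x₁]` with
`x₁ < x₀`.  Here vectors carry the Euclidean norm and linear maps the operator norm. -/
theorem fuchsian_apriori_estimate
    (n : ℕ) (hn : 1 ≤ n) (x₀ : ℝ) (hx₀ : 0 < x₀)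
    (h₀ : EuclideanSpace ℝ (Fin n) →L[ℝ] EuclideanSpace ℝ (Fin n))
    (h : ℝ → (EuclideanSpace ℝ (Fin n) →L[ℝ] EuclideanSpace ℝ (Fin n)))
    (hc : ContinuousOn h (Set.Ioo 0 x₀))
    (L : ℝ) (hL : 0 ≤ L)
    (hclose : ∀ x ∈ Set.Ioo (0:ℝ) x₀, ‖h x - h₀‖ ≤ L * x)
    (δg : ℝ → EuclideanSpace ℝ (Fin n))
    (hflat : ∀ N : ℕ, ∃ c : ℝ, 0 < c ∧ ∀ x ∈ Set.Ioo (0:ℝ) x₀, ‖δg x‖ ≤ c * x ^ N)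
    (δf : ℝ → EuclideanSpace ℝ (Fin n))
    (hdiff : ∀ x ∈ Set.Ioo (0:ℝ) x₀, DifferentiableAt ℝ δf x)
    (hode : ∀ x ∈ Set.Ioo (0:ℝ) x₀, x • deriv δf x + h x (δf x) = δg x) :
    ∀ x₁ ∈ Set.Ioo (0:ℝ) x₀, ∃ c : ℝ, 0 < c ∧
      ∀ x ∈ Set.Ioc (0:ℝ) x₁, ‖δf x‖ ≤ c * x ^ (-(1 + 2 * ‖h₀‖) / 2) := by
  intro x₁ hx₁
  set μ : ℝ := 1 + 2 * ‖h₀‖ with hμdef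
  have hμ1 : 1 ≤ μ := by have := norm_nonneg h₀; simp only [hμdef]; linarith
  obtain ⟨c₁, hc₁pos, hc₁⟩ := hflat 1
  set M : ℝ := c₁ ^ 2 * x₀ ^ (μ + 1) * Real.exp (2 * L * x₀) with hMdef
  have hMpos : 0 < M := by
    have := Real.rpow_pos_of_pos hx₀ (μ + 1)
    positivity
  set φ : ℝ → ℝ := fun t => ⟪δf t, δf t⟫ with hφdef
  have hφ_eq : ∀ t, φ t = ‖δf t‖ ^ 2 := fun t => real_inner_self_eq_norm_sq _
  have hφnn : ∀ t, 0 ≤ φ t := fun t => by rw [hφ_eq]; positivity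
  set w : ℝ → ℝ := fun t => t ^ μ * Real.exp (2 * L * t) * φ t with hwdef
  -- derivative of w with a lower bound
  have key : ∀ t ∈ Set.Ioo (0:ℝ) x₀, ∃ d : ℝ, HasDerivAt w d t ∧ -M ≤ d := by
    intro t ht
    obtain ⟨ht0, htx₀⟩ := ht
    have hf' : HasDerivAt δf (deriv δf t) t := (hdiff t ⟨ht0, htx₀⟩).hasDerivAt
    have hφ' : HasDerivAt φ (⟪δf t, deriv δf t⟫ + ⟪deriv δf t, δf t⟫) t :=
      HasDerivAt.inner ℝ hf' hf'
    have h1 : HasDerivAt (fun s : ℝ => s ^ μ) (μ * t ^ (μ - 1)) t :=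
      Real.hasDerivAt_rpow_const (Or.inl ht0.ne')
    have h2 : HasDerivAt (fun s : ℝ => Real.exp (2 * L * s))
        (Real.exp (2 * L * t) * (2 * L)) t := by
      have : HasDerivAt (fun s : ℝ => 2 * L * s) (2 * L) t := by
        simpa using (hasDerivAt_id t).const_mul (2 * L)
      exact this.exp
    have hw' : HasDerivAt w
        ((μ * t ^ (μ - 1) * Real.exp (2 * L * t) + t ^ μ * (Real.exp (2 * L * t) * (2 * L)))
          * φ t + t ^ μ * Real.exp (2 * L * t)
            * (⟪δf t, deriv δf t⟫ + ⟪deriv δf t, δf t⟫)) t := (h1.mul h2).mul hφ'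
    refine ⟨_, hw', ?_⟩
    -- rewrite using t^μ = t^(μ-1) * t
    have htmu : t ^ μ = t ^ (μ - 1) * t := by
      rw [← Real.rpow_add_one ht0.ne' (μ - 1)]
      norm_num
    have hexp_pos := Real.exp_pos (2 * L * t)
    have htpow_pos : 0 < t ^ (μ - 1) := Real.rpow_pos_of_pos ht0 _
    -- inner product identities
    have hode' : t • deriv δf t = δg t - h t (δf t) := by
      have := hode t ⟨ht0, htx₀⟩; linear_combination (norm := module) this
    have hinner : t * ⟪δf t, deriv δf t⟫ = ⟪δf t, δg t⟫ - ⟪δf t, h t (δf t)⟫ := by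
      rw [← real_inner_smul_right, hode', inner_sub_right]
    have hsym : ⟪deriv δf t, δf t⟫ = ⟪δf t, deriv δf t⟫ := real_inner_comm _ _
    -- bounds
    have hb1 : -(φ t + ‖δg t‖ ^ 2) / 2 ≤ ⟪δf t, δg t⟫ := by
      have h1 := abs_real_inner_le_norm (δf t) (δg t)
      have h2 : |⟪δf t, δg t⟫| ≥ -⟪δf t, δg t⟫ := neg_le_abs _
      have h3 : 2 * (‖δf t‖ * ‖δg t‖) ≤ ‖δf t‖ ^ 2 + ‖δg t‖ ^ 2 := by nlinarith [sq_nonneg (‖δf t‖ - ‖δg t‖)]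
      rw [hφ_eq]
      nlinarith
    have hb2 : ⟪δf t, h t (δf t)⟫ ≤ (‖h₀‖ + L * t) * φ t := by
      have h1 := abs_real_inner_le_norm (δf t) (h t (δf t))
      have h2 : ‖h t (δf t)‖ ≤ ‖h t‖ * ‖δf t‖ := (h t).le_opNorm _
      have h3 : ‖h t‖ ≤ ‖h₀‖ + L * t := by
        have := hclose t ⟨ht0, htx₀⟩
        have h4 : ‖h t‖ - ‖h₀‖ ≤ ‖h t - h₀‖ := norm_sub_norm_le _ _
        linarith
      have h5 : |⟪δf t, h t (δf t)⟫| ≥ ⟪δf t, h t (δf t)⟫ := le_abs_self _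
      have h6 : 0 ≤ ‖δf t‖ := norm_nonneg _
      rw [hφ_eq]
      nlinarith [norm_nonneg (h t (δf t))]
    have hb3 : t ^ (μ - 1) * Real.exp (2 * L * t) * ‖δg t‖ ^ 2 ≤ M := by
      have hg := hc₁ t ⟨ht0, htx₀⟩
      have hg2 : ‖δg t‖ ^ 2 ≤ c₁ ^ 2 * t ^ 2 := by
        have := norm_nonneg (δg t); nlinarith
      have hpow : t ^ (μ - 1) * t ^ 2 = t ^ (μ + 1) := by
        rw [← Real.rpow_natCast t 2, ← Real.rpow_add ht0]
        congr 1
        push_cast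
        ring
      have hpow2 : t ^ (μ + 1) ≤ x₀ ^ (μ + 1) :=
        Real.rpow_le_rpow ht0.le htx₀.le (by linarith)
      have hexp : Real.exp (2 * L * t) ≤ Real.exp (2 * L * x₀) := by
        apply Real.exp_le_exp.2
        have : 0 ≤ 2 * L := by linarith
        exact mul_le_mul_of_nonneg_left htx₀.le this
      have hnn : (0:ℝ) ≤ t ^ (μ + 1) := (Real.rpow_pos_of_pos ht0 _).le
      calc t ^ (μ - 1) * Real.exp (2 * L * t) * ‖δg t‖ ^ 2
          ≤ t ^ (μ - 1) * Real.exp (2 * L * t) * (c₁ ^ 2 * t ^ 2) := by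
            apply mul_le_mul_of_nonneg_left hg2; positivity
        _ = c₁ ^ 2 * (t ^ (μ + 1)) * Real.exp (2 * L * t) := by rw [← hpow]; ring
        _ ≤ c₁ ^ 2 * (x₀ ^ (μ + 1)) * Real.exp (2 * L * x₀) := by
            apply mul_le_mul (by nlinarith [sq_nonneg c₁]) hexp hexp_pos.le (by positivity)
        _ = M := rfl
    -- put it together
    have hmain : -(t ^ (μ - 1) * Real.exp (2 * L * t) * ‖δg t‖ ^ 2) ≤
        (μ * t ^ (μ - 1) * Real.exp (2 * L * t) + t ^ μ * (Real.exp (2 * L * t) * (2 * L)))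
          * φ t + t ^ μ * Real.exp (2 * L * t)
            * (⟪δf t, deriv δf t⟫ + ⟪deriv δf t, δf t⟫) := by
      rw [hsym, htmu]
      have expand : (μ * t ^ (μ - 1) * Real.exp (2 * L * t)
            + t ^ (μ - 1) * t * (Real.exp (2 * L * t) * (2 * L))) * φ t
          + t ^ (μ - 1) * t * Real.exp (2 * L * t)
            * (⟪δf t, deriv δf t⟫ + ⟪δf t, deriv δf t⟫)
          = t ^ (μ - 1) * Real.exp (2 * L * t)
            * ((μ + 2 * L * t) * φ t + 2 * (t * ⟪δf t, deriv δf t⟫)) := by ring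
      rw [expand, hinner]
      have hquad : -‖δg t‖ ^ 2 ≤
          (μ + 2 * L * t) * φ t + 2 * (⟪δf t, δg t⟫ - ⟪δf t, h t (δf t)⟫) := by
        have hφt := hφnn t
        nlinarith [hb1, hb2]
      nlinarith [mul_le_mul_of_nonneg_left hquad (mul_pos htpow_pos hexp_pos).le]
    linarith [hb3, hmain]
  -- monotonicity of w + M * id on Ioo 0 x₀
  have hmono : MonotoneOn (fun s => w s + M * s) (Set.Ioo 0 x₀) := by
    have hconv : Convex ℝ (Set.Ioo (0:ℝ) x₀) := convex_Ioo _ _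
    have hderivs : ∀ t ∈ Set.Ioo (0:ℝ) x₀,
        HasDerivAt (fun s => w s + M * s) (deriv (fun s => w s + M * s) t) t ∧
          0 ≤ deriv (fun s => w s + M * s) t := by
      intro t ht
      obtain ⟨d, hd, hdM⟩ := key t ht
      have hW : HasDerivAt (fun s => w s + M * s) (d + M) t := by
        exact (hd.add ((hasDerivAt_id t).const_mul M)).congr_deriv (by ring)
      rw [hW.deriv]
      exact ⟨by simpa [hW.deriv] using hW, by linarith⟩
    apply monotoneOn_of_deriv_nonneg hconv
    · exact fun t ht => ((hderivs t ht).1.differentiableAt.continuousAt).continuousWithinAt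
    · intro t ht
      rw [interior_Ioo] at ht
      exact ((hderivs t ht).1.differentiableAt).differentiableWithinAt
    · intro t ht
      rw [interior_Ioo] at ht
      exact (hderivs t ht).2
  set K : ℝ := w x₁ + M * x₁ with hKdef
  have hwx₁nn : 0 ≤ w x₁ := by
    have := Real.rpow_pos_of_pos hx₁.1 μ
    have := Real.exp_pos (2 * L * x₁)
    have := hφnn x₁
    positivity
  have hKpos : 0 < K := by
    have := mul_pos hMpos hx₁.1; simp only [hKdef]; linarith
  refine ⟨Real.sqrt K, Real.sqrt_pos.2 hKpos, ?_⟩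
  intro x hx
  obtain ⟨hx0, hxx₁⟩ := hx
  have hxIoo : x ∈ Set.Ioo (0:ℝ) x₀ := ⟨hx0, lt_of_le_of_lt hxx₁ hx₁.2⟩
  have hwx : w x ≤ K := by
    have h3 := hmono hxIoo hx₁ hxx₁
    simp only at h3
    have hMx : 0 ≤ M * x := mul_nonneg hMpos.le hx0.le
    simp only [hKdef]
    linarith
  -- from w x ≤ K deduce φ x ≤ K * x ^ (-μ)
  have hxpow_pos : 0 < x ^ μ := Real.rpow_pos_of_pos hx0 μ
  have hexp1 : 1 ≤ Real.exp (2 * L * x) := by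
    rw [Real.one_le_exp_iff]; positivity
  have hφx : φ x ≤ K * x ^ (-μ) := by
    have h1 : x ^ μ * φ x ≤ w x := by
      simp only [hwdef]
      nlinarith [mul_nonneg (mul_nonneg hxpow_pos.le (hφnn x)) (sub_nonneg.2 hexp1)]
    have h2 : x ^ μ * φ x ≤ K := le_trans h1 hwx
    rw [Real.rpow_neg hx0.le, ← div_eq_mul_inv, le_div_iff₀ hxpow_pos]
    nlinarith
  -- conclude
  have hnorm : ‖δf x‖ = Real.sqrt (φ x) := by
    rw [hφ_eq, Real.sqrt_sq (norm_nonneg _)]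
  rw [hnorm]
  have hrpow : Real.sqrt (x ^ (-μ)) = x ^ (-(1 + 2 * ‖h₀‖) / 2) := by
    rw [Real.sqrt_eq_rpow, ← Real.rpow_mul hx0.le]
    congr 1
    simp only [hμdef]
    ring
  calc Real.sqrt (φ x) ≤ Real.sqrt (K * x ^ (-μ)) := Real.sqrt_le_sqrt hφx
    _ = Real.sqrt K * Real.sqrt (x ^ (-μ)) := Real.sqrt_mul hKpos.le _
    _ = Real.sqrt K * x ^ (-(1 + 2 * ‖h₀‖) / 2) := by rw [hrpow]
end

section
/- Dependence of logarithmic terms on boundary data in the Jordan case (equations (B.18)–(B.19)): Let λ, ℓ̂ ∈ ℤ with ℓ̂ ≤ λ, let N := [[0,1],[0,0]], let (h_k)_{k≥1} be a sequence of real 2×2 matrices and (g_n)_{n≥ℓ̂} a sequence of vectors in ℝ². For each pair (c₁, c₂) ∈ ℝ² there is exactly one triple of ℝ²-valued sequences (f⁰_n, f¹_n, f²_n)_{n≥ℓ̂} with f⁰_λ = (c₁, c₂) satisfying, for all n ≥ ℓ̂ (with coefficients of index < ℓ̂ set to zero): ((n−λ)·Id + N)·f²_n + Σ_{k=1}^{n−ℓ̂}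 h_k·f²_{n−k} = 0; 2·f²_n + ((n−λ)·Id + N)·f¹_n + Σ_{k=1}^{n−ℓ̂} h_k·f¹_{n−k} = 0; and f¹_n + ((n−λ)·Id + N)·f⁰_n + Σ_{k=1}^{n−ℓ̂} h_k·f⁰_{n−k} = g_n. Moreover, setting H := Σ_{k=1}^{λ−ℓ̂} h_k·f⁰_{λ−k} ∈ ℝ² (which does not depend on (c₁,c₂)), the sequences (f¹_n) and (f²_n) vanish identically if and only if H₂ = (g_λ)₂ and c₂ = (g_λ)₁ − H₁. In particular, the absence of logarithmic terms in the formal solution depends on the value of the integration constant c₂, i.e. on the boundary conditions. -/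
open Matrix

/-- The matrix `(n−λ)·Id + N` appearing in the Jordan-block recursions (B.18)–(B.19),
where `N = [[0,1],[0,0]]`. -/
noncomputable def jordanCoeffMatrix (lam n : ℤ) : Matrix (Fin 2) (Fin 2) ℝ :=
  ((n : ℝ) - (lam : ℝ)) • (1 : Matrix (Fin 2) (Fin 2) ℝ) + !![0, 1; 0, 0]

/-- The recursion relations (B.18)–(B.19) for the formal solution
`f ~ Σ f⁰_n xⁿ + log x · Σ f¹_n xⁿ + log²x · Σ f²_n xⁿ` of the 2×2 Fuchsian system
whose indicial matrix is the Jordan block `−λ·Id + N`. -/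
def RecJordan (lam lhat : ℤ) (hcoef : ℤ → Matrix (Fin 2) (Fin 2) ℝ)
    (g : ℤ → Fin 2 → ℝ)
    (t : (ℤ → Fin 2 → ℝ) × (ℤ → Fin 2 → ℝ) × (ℤ → Fin 2 → ℝ)) : Prop :=
  (∀ m : ℤ, m < lhat → t.1 m = 0 ∧ t.2.1 m = 0 ∧ t.2.2 m = 0) ∧
  ∀ n : ℤ, lhat ≤ n →
    (jordanCoeffMatrix lam n *ᵥ t.2.2 n
        + ∑ k ∈ Finset.Icc 1 (n - lhat), hcoef k *ᵥ t.2.2 (n - k) = 0) ∧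
    ((2 : ℝ) • t.2.2 n + jordanCoeffMatrix lam n *ᵥ t.2.1 n
        + ∑ k ∈ Finset.Icc 1 (n - lhat), hcoef k *ᵥ t.2.1 (n - k) = 0) ∧
    (t.2.1 n + jordanCoeffMatrix lam n *ᵥ t.1 n
        + ∑ k ∈ Finset.Icc 1 (n - lhat), hcoef k *ᵥ t.1 (n - k) = g n)



lemma jcm_eq (lam n : ℤ) : jordanCoeffMatrix lam n = !![(n:ℝ)-lam, 1; 0, (n:ℝ)-lam] := by
  ext i j; fin_cases i <;> fin_cases j <;>
    simp [jordanCoeffMatrix, Matrix.one_apply]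

lemma jcm_mulVec (lam n : ℤ) (v : Fin 2 → ℝ) :
    jordanCoeffMatrix lam n *ᵥ v = ![((n:ℝ)-lam) * v 0 + v 1, ((n:ℝ)-lam) * v 1] := by
  rw [jcm_eq]; funext i; fin_cases i <;>
    simp [Matrix.mulVec, dotProduct, Fin.sum_univ_two]

lemma jcmN_mulVec (lam : ℤ) (v : Fin 2 → ℝ) :
    jordanCoeffMatrix lam lam *ᵥ v = ![v 1, 0] := by
  rw [jcm_mulVec]; simp

noncomputable def Binv (lam n : ℤ) : Matrix (Fin 2) (Fin 2) ℝ :=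
  !![((n:ℝ)-lam)⁻¹, -(((n:ℝ)-lam)⁻¹ * ((n:ℝ)-lam)⁻¹); 0, ((n:ℝ)-lam)⁻¹]

lemma jcm_inv_key (lam n : ℤ) (hn : n ≠ lam) (v w : Fin 2 → ℝ) :
    jordanCoeffMatrix lam n *ᵥ v = w ↔ v = Binv lam n *ᵥ w := by
  have hd : ((n:ℝ) - lam) ≠ 0 := sub_ne_zero.mpr (by exact_mod_cast hn)
  have hBA : Binv lam n * jordanCoeffMatrix lam n = 1 := by
    rw [jcm_eq]; ext i j; fin_cases i <;> fin_cases j <;>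
      (simp [Binv, Matrix.mul_apply, Fin.sum_univ_two, Matrix.one_apply]; try field_simp; try ring)
  have hAB : jordanCoeffMatrix lam n * Binv lam n = 1 := by
    rw [jcm_eq]; ext i j; fin_cases i <;> fin_cases j <;>
      (simp [Binv, Matrix.mul_apply, Fin.sum_univ_two, Matrix.one_apply]; try field_simp; try ring)
  constructor
  · intro h; rw [← h, Matrix.mulVec_mulVec, hBA, Matrix.one_mulVec]
  · intro h; rw [h, Matrix.mulVec_mulVec, hAB, Matrix.one_mulVec]

lemma int_strong_ind (lhat : ℤ) (P : ℤ → Prop) (h0 : ∀ m, m < lhat → P m)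
    (hstep : ∀ n, lhat ≤ n → (∀ m, m < n → P m) → P n) : ∀ n, P n := by
  have key : ∀ N : ℕ, ∀ n : ℤ, n ≤ lhat + N → P n := by
    intro N
    induction N with
    | zero =>
      intro n hn
      rcases lt_or_eq_of_le (by omega : n ≤ lhat) with h | h
      · exact h0 n h
      · exact h ▸ hstep lhat le_rfl (fun m hm => h0 m (h ▸ hm))
    | succ k ih =>
      intro n hn
      rcases lt_or_ge n lhat with h | h
      · exact h0 n h
      · exact hstep n h (fun m hm => ih m (by omega))
  intro n; exact key (n - lhat).toNat n (by omega)

section Build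
variable {V : Type*} [Zero V]

noncomputable def buildAux (lhat : ℤ) (Phi : ℤ → (ℤ → V) → V) : ℕ → V
  | m => Phi (lhat + m)
      (fun j => if h : lhat ≤ j ∧ j < lhat + m then buildAux lhat Phi (j - lhat).toNat else 0)
termination_by m => m
decreasing_by omega

noncomputable def build (lhat : ℤ) (Phi : ℤ → (ℤ → V) → V) (n : ℤ) : V :=
  if lhat ≤ n then buildAux lhat Phi (n - lhat).toNat else 0

lemma build_lt (lhat : ℤ) (Phi : ℤ → (ℤ → V) → V) (n : ℤ) (hn : n < lhat) :
    build lhat Phi n = 0 := by simp [build, not_le.mpr hn]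

lemma build_ge (lhat : ℤ) (Phi : ℤ → (ℤ → V) → V)
    (hloc : ∀ n u v, (∀ m, m < n → u m = v m) → Phi n u = Phi n v)
    (n : ℤ) (hn : lhat ≤ n) : build lhat Phi n = Phi n (build lhat Phi) := by
  have h1 : build lhat Phi n = buildAux lhat Phi (n - lhat).toNat := by
    simp [build, hn]
  rw [h1, buildAux]
  have h2 : lhat + ((n - lhat).toNat : ℤ) = n := by omega
  rw [h2]
  apply hloc
  intro m hm
  by_cases h : lhat ≤ m
  · rw [dif_pos ⟨h, hm⟩]
    simp [build, h]
  · rw [dif_neg (by omega), build_lt lhat Phi m (by omega)]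

lemma build_unique (lhat : ℤ) (Phi : ℤ → (ℤ → V) → V)
    (hloc : ∀ n u v, (∀ m, m < n → u m = v m) → Phi n u = Phi n v)
    (t : ℤ → V) (h0 : ∀ m, m < lhat → t m = 0)
    (hfix : ∀ n, lhat ≤ n → t n = Phi n t) : t = build lhat Phi := by
  funext n
  refine int_strong_ind lhat (fun n => t n = build lhat Phi n) ?_ ?_ n
  · intro m hm; rw [h0 m hm, build_lt lhat Phi m hm]
  · intro n hn ih
    rw [hfix n hn, build_ge lhat Phi hloc n hn]
    exact hloc n t _ ih

end Build

section Jordan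

variable (lam lhat : ℤ) (hcoef : ℤ → Matrix (Fin 2) (Fin 2) ℝ) (g : ℤ → Fin 2 → ℝ)

/-- the equations of `RecJordan` at a single index, for a sequence of triples -/
def EqsAt (u : ℤ → (Fin 2 → ℝ) × (Fin 2 → ℝ) × (Fin 2 → ℝ)) (n : ℤ) : Prop :=
  (jordanCoeffMatrix lam n *ᵥ (u n).2.2
      + ∑ k ∈ Finset.Icc 1 (n - lhat), hcoef k *ᵥ (u (n - k)).2.2 = 0) ∧
  ((2 : ℝ) • (u n).2.2 + jordanCoeffMatrix lam n *ᵥ (u n).2.1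
      + ∑ k ∈ Finset.Icc 1 (n - lhat), hcoef k *ᵥ (u (n - k)).2.1 = 0) ∧
  ((u n).2.1 + jordanCoeffMatrix lam n *ᵥ (u n).1
      + ∑ k ∈ Finset.Icc 1 (n - lhat), hcoef k *ᵥ (u (n - k)).1 = g n)

noncomputable def jPhi (c : Fin 2 → ℝ) (n : ℤ)
    (u : ℤ → (Fin 2 → ℝ) × (Fin 2 → ℝ) × (Fin 2 → ℝ)) :
    (Fin 2 → ℝ) × (Fin 2 → ℝ) × (Fin 2 → ℝ) :=
  if n = lam then
    (c,
     g n - (∑ k ∈ Finset.Icc 1 (n - lhat), hcoef k *ᵥ (u (n - k)).1)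
         - jordanCoeffMatrix lam lam *ᵥ c,
     -((2⁻¹ : ℝ) • (jordanCoeffMatrix lam lam *ᵥ
         (g n - (∑ k ∈ Finset.Icc 1 (n - lhat), hcoef k *ᵥ (u (n - k)).1)
             - jordanCoeffMatrix lam lam *ᵥ c)
        + ∑ k ∈ Finset.Icc 1 (n - lhat), hcoef k *ᵥ (u (n - k)).2.1)))
  else
    (Binv lam n *ᵥ (g n
        - (-(Binv lam n *ᵥ ((2:ℝ) • (-(Binv lam n *ᵥ
              ∑ k ∈ Finset.Icc 1 (n - lhat), hcoef k *ᵥ (u (n - k)).2.2))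
            + ∑ k ∈ Finset.Icc 1 (n - lhat), hcoef k *ᵥ (u (n - k)).2.1)))
        - ∑ k ∈ Finset.Icc 1 (n - lhat), hcoef k *ᵥ (u (n - k)).1),
     -(Binv lam n *ᵥ ((2:ℝ) • (-(Binv lam n *ᵥ
              ∑ k ∈ Finset.Icc 1 (n - lhat), hcoef k *ᵥ (u (n - k)).2.2))
            + ∑ k ∈ Finset.Icc 1 (n - lhat), hcoef k *ᵥ (u (n - k)).2.1)),
     -(Binv lam n *ᵥ ∑ k ∈ Finset.Icc 1 (n - lhat), hcoef k *ᵥ (u (n - k)).2.2))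

lemma jPhi_loc (c : Fin 2 → ℝ) :
    ∀ n u v, (∀ m, m < n → u m = v m) → jPhi lam lhat hcoef g c n u = jPhi lam lhat hcoef g c n v := by
  intro n u v h
  have h1 : ∑ k ∈ Finset.Icc 1 (n - lhat), hcoef k *ᵥ (u (n - k)).1
      = ∑ k ∈ Finset.Icc 1 (n - lhat), hcoef k *ᵥ (v (n - k)).1 :=
    Finset.sum_congr rfl fun k hk => by
      rw [h (n - k) (by rw [Finset.mem_Icc] at hk; omega)]
  have h2 : ∑ k ∈ Finset.Icc 1 (n - lhat), hcoef k *ᵥ (u (n - k)).2.1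
      = ∑ k ∈ Finset.Icc 1 (n - lhat), hcoef k *ᵥ (v (n - k)).2.1 :=
    Finset.sum_congr rfl fun k hk => by
      rw [h (n - k) (by rw [Finset.mem_Icc] at hk; omega)]
  have h3 : ∑ k ∈ Finset.Icc 1 (n - lhat), hcoef k *ᵥ (u (n - k)).2.2
      = ∑ k ∈ Finset.Icc 1 (n - lhat), hcoef k *ᵥ (v (n - k)).2.2 :=
    Finset.sum_congr rfl fun k hk => by
      rw [h (n - k) (by rw [Finset.mem_Icc] at hk; omega)]
  unfold jPhi
  rw [h1, h2, h3]

end Jordan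
section Jordan2
variable (lam lhat : ℤ) (hcoef : ℤ → Matrix (Fin 2) (Fin 2) ℝ) (g : ℤ → Fin 2 → ℝ)

lemma step1 (c : Fin 2 → ℝ) (u : ℤ → (Fin 2 → ℝ) × (Fin 2 → ℝ) × (Fin 2 → ℝ))
    (n : ℤ) (hn : n ≠ lam) :
    EqsAt lam lhat hcoef g u n ↔ u n = jPhi lam lhat hcoef g c n u := by
  unfold EqsAt jPhi
  rw [if_neg hn]
  set S0 := ∑ k ∈ Finset.Icc 1 (n - lhat), hcoef k *ᵥ (u (n - k)).1 with hS0
  set S1 := ∑ k ∈ Finset.Icc 1 (n - lhat), hcoef k *ᵥ (u (n - k)).2.1 with hS1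
  set S2 := ∑ k ∈ Finset.Icc 1 (n - lhat), hcoef k *ᵥ (u (n - k)).2.2 with hS2
  constructor
  · rintro ⟨e1, e2, e3⟩
    have h2 : (u n).2.2 = -(Binv lam n *ᵥ S2) := by
      have := (jcm_inv_key lam n hn _ _).mp (eq_neg_of_add_eq_zero_left e1)
      rwa [Matrix.mulVec_neg] at this
    rw [h2] at e2
    have h1 : (u n).2.1 = -(Binv lam n *ᵥ ((2:ℝ) • -(Binv lam n *ᵥ S2) + S1)) := by
      have e2' : jordanCoeffMatrix lam n *ᵥ (u n).2.1
          + ((2:ℝ) • -(Binv lam n *ᵥ S2) + S1) = 0 := by rw [← e2]; abel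
      have := (jcm_inv_key lam n hn _ _).mp (eq_neg_of_add_eq_zero_left e2')
      rwa [Matrix.mulVec_neg] at this
    rw [h1] at e3
    have h0 : (u n).1 = Binv lam n *ᵥ
        (g n - -(Binv lam n *ᵥ ((2:ℝ) • -(Binv lam n *ᵥ S2) + S1)) - S0) := by
      have e3' : jordanCoeffMatrix lam n *ᵥ (u n).1
          = g n - -(Binv lam n *ᵥ ((2:ℝ) • -(Binv lam n *ᵥ S2) + S1)) - S0 := by
        rw [← e3]; abel
      exact (jcm_inv_key lam n hn _ _).mp e3'
    exact Prod.ext h0 (Prod.ext h1 h2)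
  · intro h
    have h0 := congrArg (·.1) h
    have h1 := congrArg (·.2.1) h
    have h2 := congrArg (·.2.2) h
    simp only at h0 h1 h2
    have a2 : jordanCoeffMatrix lam n *ᵥ (u n).2.2 = -S2 := by
      rw [(jcm_inv_key lam n hn _ _), Matrix.mulVec_neg]; exact h2
    have a1 : jordanCoeffMatrix lam n *ᵥ (u n).2.1
        = -((2:ℝ) • -(Binv lam n *ᵥ S2) + S1) := by
      rw [(jcm_inv_key lam n hn _ _), Matrix.mulVec_neg]; exact h1
    have a0 : jordanCoeffMatrix lam n *ᵥ (u n).1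
        = g n - -(Binv lam n *ᵥ ((2:ℝ) • -(Binv lam n *ᵥ S2) + S1)) - S0 :=
      (jcm_inv_key lam n hn _ _).mpr h0
    refine ⟨?_, ?_, ?_⟩
    · rw [a2]; abel
    · rw [a1, h2]; abel
    · rw [a0, h1]; abel

end Jordan2
section Jordan3
variable (lam lhat : ℤ) (hcoef : ℤ → Matrix (Fin 2) (Fin 2) ℝ) (g : ℤ → Fin 2 → ℝ)

lemma van (u : ℤ → (Fin 2 → ℝ) × (Fin 2 → ℝ) × (Fin 2 → ℝ))
    (h0 : ∀ m, m < lhat → u m = 0)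
    (he : ∀ n, lhat ≤ n → n < lam → EqsAt lam lhat hcoef g u n) :
    ∀ m, m < lam → (u m).2.1 = 0 ∧ (u m).2.2 = 0 := by
  refine int_strong_ind lhat (fun m => m < lam → (u m).2.1 = 0 ∧ (u m).2.2 = 0)
    (fun m hm _ => by rw [h0 m hm]; exact ⟨rfl, rfl⟩) ?_
  intro n hn ih hlt
  obtain ⟨e1, e2, e3⟩ := he n hn hlt
  have hne : n ≠ lam := ne_of_lt hlt
  have hS2 : ∑ k ∈ Finset.Icc 1 (n - lhat), hcoef k *ᵥ (u (n - k)).2.2 = 0 :=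
    Finset.sum_eq_zero fun k hk => by
      rw [Finset.mem_Icc] at hk
      rw [(ih (n - k) (by omega) (by omega)).2, Matrix.mulVec_zero]
  have hS1 : ∑ k ∈ Finset.Icc 1 (n - lhat), hcoef k *ᵥ (u (n - k)).2.1 = 0 :=
    Finset.sum_eq_zero fun k hk => by
      rw [Finset.mem_Icc] at hk
      rw [(ih (n - k) (by omega) (by omega)).1, Matrix.mulVec_zero]
  rw [hS2, add_zero] at e1
  have hx : (u n).2.2 = 0 := by
    have := (jcm_inv_key lam n hne _ _).mp e1
    rwa [Matrix.mulVec_zero] at this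
  rw [hS1, add_zero, hx, smul_zero, zero_add] at e2
  have hy : (u n).2.1 = 0 := by
    have := (jcm_inv_key lam n hne _ _).mp e2
    rwa [Matrix.mulVec_zero] at this
  exact ⟨hy, hx⟩

lemma step2 (hle : lhat ≤ lam) (c : Fin 2 → ℝ)
    (u : ℤ → (Fin 2 → ℝ) × (Fin 2 → ℝ) × (Fin 2 → ℝ))
    (hv : ∀ m, m < lam → (u m).2.1 = 0 ∧ (u m).2.2 = 0) :
    (EqsAt lam lhat hcoef g u lam ∧ (u lam).1 = c) ↔
      u lam = jPhi lam lhat hcoef g c lam u := by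
  have hS1 : ∑ k ∈ Finset.Icc 1 (lam - lhat), hcoef k *ᵥ (u (lam - k)).2.1 = 0 :=
    Finset.sum_eq_zero fun k hk => by
      rw [Finset.mem_Icc] at hk
      rw [(hv (lam - k) (by omega)).1, Matrix.mulVec_zero]
  have hS2 : ∑ k ∈ Finset.Icc 1 (lam - lhat), hcoef k *ᵥ (u (lam - k)).2.2 = 0 :=
    Finset.sum_eq_zero fun k hk => by
      rw [Finset.mem_Icc] at hk
      rw [(hv (lam - k) (by omega)).2, Matrix.mulVec_zero]
  unfold EqsAt jPhi
  rw [if_pos rfl, hS1, hS2]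
  set S0 := ∑ k ∈ Finset.Icc 1 (lam - lhat), hcoef k *ᵥ (u (lam - k)).1 with hS0
  constructor
  · rintro ⟨⟨e1, e2, e3⟩, hc⟩
    rw [hc] at e3
    have g1 : (u lam).2.1 = g lam - S0 - jordanCoeffMatrix lam lam *ᵥ c := by
      rw [← e3]; abel
    have g2 : (u lam).2.2 = -((2⁻¹:ℝ) •
        (jordanCoeffMatrix lam lam *ᵥ (g lam - S0 - jordanCoeffMatrix lam lam *ᵥ c) + 0)) := by
      rw [← g1]
      funext i
      have h := congrFun e2 i
      simp only [Pi.add_apply, Pi.smul_apply, Pi.zero_apply, Pi.neg_apply,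
        smul_eq_mul, add_zero] at h ⊢
      linarith
    exact Prod.ext hc (Prod.ext g1 g2)
  · intro h
    have h0 := congrArg (·.1) h
    have h1 := congrArg (·.2.1) h
    have h2 := congrArg (·.2.2) h
    simp only at h0 h1 h2
    refine ⟨⟨?_, ?_, ?_⟩, h0⟩
    · rw [h2, add_zero]
      rw [jcmN_mulVec, jcmN_mulVec, jcmN_mulVec]
      funext i
      fin_cases i <;> simp
    · rw [h1, h2, jcmN_mulVec, jcmN_mulVec]
      funext i
      fin_cases i <;> (simp; try ring)
    · rw [h0, h1, jcmN_mulVec]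
      abel

end Jordan3
section Jordan4
variable (lam lhat : ℤ) (hcoef : ℤ → Matrix (Fin 2) (Fin 2) ℝ) (g : ℤ → Fin 2 → ℝ)

def toSeq (t : (ℤ → Fin 2 → ℝ) × (ℤ → Fin 2 → ℝ) × (ℤ → Fin 2 → ℝ)) :
    ℤ → (Fin 2 → ℝ) × (Fin 2 → ℝ) × (Fin 2 → ℝ) :=
  fun n => (t.1 n, t.2.1 n, t.2.2 n)

lemma recJordan_iff (t : (ℤ → Fin 2 → ℝ) × (ℤ → Fin 2 → ℝ) × (ℤ → Fin 2 → ℝ)) :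
    RecJordan lam lhat hcoef g t ↔
      ((∀ m : ℤ, m < lhat → toSeq t m = 0) ∧
        ∀ n : ℤ, lhat ≤ n → EqsAt lam lhat hcoef g (toSeq t) n) := by
  unfold RecJordan EqsAt toSeq
  simp only [Prod.mk.injEq, Prod.mk_eq_zero]

lemma sol_to_fix (hle : lhat ≤ lam) (c : Fin 2 → ℝ)
    (t : (ℤ → Fin 2 → ℝ) × (ℤ → Fin 2 → ℝ) × (ℤ → Fin 2 → ℝ))
    (h : RecJordan lam lhat hcoef g t) (hc : t.1 lam = c) :
    toSeq t = build lhat (jPhi lam lhat hcoef g c) := by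
  rw [recJordan_iff] at h
  apply build_unique lhat _ (jPhi_loc lam lhat hcoef g c) _ h.1
  intro n hn
  by_cases hnl : n = lam
  · have hv := van lam lhat hcoef g (toSeq t) h.1
      (fun m hm _ => h.2 m hm)
    rw [hnl]
    exact (step2 lam lhat hcoef g hle c (toSeq t) hv).mp ⟨h.2 lam hle, hc⟩
  · exact (step1 lam lhat hcoef g c (toSeq t) n hnl).mp (h.2 n hn)

lemma fix_to_sol (hle : lhat ≤ lam) (c : Fin 2 → ℝ)
    (t : (ℤ → Fin 2 → ℝ) × (ℤ → Fin 2 → ℝ) × (ℤ → Fin 2 → ℝ))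
    (h : toSeq t = build lhat (jPhi lam lhat hcoef g c)) :
    RecJordan lam lhat hcoef g t ∧ t.1 lam = c := by
  have hfix : ∀ n, lhat ≤ n → toSeq t n = jPhi lam lhat hcoef g c n (toSeq t) := by
    intro n hn
    conv_lhs => rw [h]
    rw [build_ge lhat _ (jPhi_loc lam lhat hcoef g c) n hn, ← h]
  have h0 : ∀ m, m < lhat → toSeq t m = 0 := by
    intro m hm; rw [h]; exact build_lt _ _ m hm
  have heq_ne : ∀ n, lhat ≤ n → n ≠ lam → EqsAt lam lhat hcoef g (toSeq t) n :=
    fun n hn hnl => (step1 lam lhat hcoef g c (toSeq t) n hnl).mpr (hfix n hn)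
  have hv := van lam lhat hcoef g (toSeq t) h0
    (fun n hn hlt => heq_ne n hn (ne_of_lt hlt))
  have hlam := (step2 lam lhat hcoef g hle c (toSeq t) hv).mpr (hfix lam hle)
  refine ⟨(recJordan_iff lam lhat hcoef g t).mpr ⟨h0, ?_⟩, hlam.2⟩
  intro n hn
  by_cases hnl : n = lam
  · subst hnl; exact hlam.1
  · exact heq_ne n hn hnl

lemma agree_below (t t' : (ℤ → Fin 2 → ℝ) × (ℤ → Fin 2 → ℝ) × (ℤ → Fin 2 → ℝ))
    (h : RecJordan lam lhat hcoef g t) (h' : RecJordan lam lhat hcoef g t') :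
    ∀ m, m < lam → toSeq t m = toSeq t' m := by
  rw [recJordan_iff] at h h'
  refine int_strong_ind lhat (fun m => m < lam → toSeq t m = toSeq t' m)
    (fun m hm _ => by rw [h.1 m hm, h'.1 m hm]) ?_
  intro n hn ih hlt
  have hne : n ≠ lam := ne_of_lt hlt
  rw [(step1 lam lhat hcoef g 0 (toSeq t) n hne).mp (h.2 n hn),
    (step1 lam lhat hcoef g 0 (toSeq t') n hne).mp (h'.2 n hn)]
  exact jPhi_loc lam lhat hcoef g 0 n _ _ (fun m hm => ih m hm (by omega))

end Jordan4

/-- Dependence of logarithmic terms on boundary data in the Jordan case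
(equations (B.18)–(B.19)): for each pair of integration constants `(c₁,c₂)` there is
exactly one triple of sequences satisfying the recursions with `f⁰_λ = (c₁,c₂)`; the
vector `H = Σ_{k=1}^{λ−ℓ̂} h_k·f⁰_{λ−k}` does not depend on `(c₁,c₂)`; and the
logarithmic coefficients `(f¹,f²)` vanish identically if and only if `H₂ = (g_λ)₂` and
`c₂ = (g_λ)₁ − H₁`. -/
theorem jordan_logs_depend_on_boundary
    (lam lhat : ℤ) (hle : lhat ≤ lam)
    (hcoef : ℤ → Matrix (Fin 2) (Fin 2) ℝ) (g : ℤ → Fin 2 → ℝ) :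
    (∀ c : Fin 2 → ℝ,
      ∃! t : (ℤ → Fin 2 → ℝ) × (ℤ → Fin 2 → ℝ) × (ℤ → Fin 2 → ℝ),
        RecJordan lam lhat hcoef g t ∧ t.1 lam = c) ∧
    (∀ t t' : (ℤ → Fin 2 → ℝ) × (ℤ → Fin 2 → ℝ) × (ℤ → Fin 2 → ℝ),
      RecJordan lam lhat hcoef g t → RecJordan lam lhat hcoef g t' →
      (∑ k ∈ Finset.Icc 1 (lam - lhat), hcoef k *ᵥ t.1 (lam - k))
        = ∑ k ∈ Finset.Icc 1 (lam - lhat), hcoef k *ᵥ t'.1 (lam - k)) ∧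
    (∀ t : (ℤ → Fin 2 → ℝ) × (ℤ → Fin 2 → ℝ) × (ℤ → Fin 2 → ℝ),
      RecJordan lam lhat hcoef g t →
      ((t.2.1 = 0 ∧ t.2.2 = 0) ↔
        ((∑ k ∈ Finset.Icc 1 (lam - lhat), hcoef k *ᵥ t.1 (lam - k)) 1 = g lam 1 ∧
          t.1 lam 1 = g lam 0
            - (∑ k ∈ Finset.Icc 1 (lam - lhat), hcoef k *ᵥ t.1 (lam - k)) 0))) := by
  refine ⟨?_, ?_, ?_⟩
  · -- Part 1: existence and uniqueness
    intro c
    refine ⟨(fun n => (build lhat (jPhi lam lhat hcoef g c) n).1,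
             fun n => (build lhat (jPhi lam lhat hcoef g c) n).2.1,
             fun n => (build lhat (jPhi lam lhat hcoef g c) n).2.2), ?_, ?_⟩
    · exact fix_to_sol lam lhat hcoef g hle c _ (funext fun n => rfl)
    · intro t' ht'
      have h := sol_to_fix lam lhat hcoef g hle c t' ht'.1 ht'.2
      refine Prod.ext ?_ (Prod.ext ?_ ?_) <;> funext n
      · exact congrArg (·.1) (congrFun h n)
      · exact congrArg (·.2.1) (congrFun h n)
      · exact congrArg (·.2.2) (congrFun h n)
  · -- Part 2: H is independent of the boundary data
    intro t t' ht ht'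
    refine Finset.sum_congr rfl fun k hk => ?_
    rw [Finset.mem_Icc] at hk
    have h := agree_below lam lhat hcoef g t t' ht ht' (lam - k) (by omega)
    rw [show t.1 (lam - k) = t'.1 (lam - k) from congrArg (·.1) h]
  · -- Part 3: characterization of vanishing logs
    intro t ht
    constructor
    · rintro ⟨h1, h2⟩
      obtain ⟨e1, e2, e3⟩ := ht.2 lam hle
      rw [h1, jcmN_mulVec] at e3
      constructor
      · have h3 := congrFun e3 1
        simp only [Pi.add_apply, Pi.zero_apply, Matrix.cons_val_one, Matrix.head_cons,
          zero_add, add_zero, Matrix.cons_val_zero] at h3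
        linarith
      · have h3 := congrFun e3 0
        simp only [Pi.add_apply, Pi.zero_apply, Matrix.cons_val_zero, zero_add] at h3
        linarith
    · rintro ⟨hH, hc⟩
      have hri := (recJordan_iff lam lhat hcoef g t).mp ht
      have hv := van lam lhat hcoef g (toSeq t) hri.1 (fun n hn _ => hri.2 n hn)
      have key : ∀ n : ℤ, t.2.1 n = 0 ∧ t.2.2 n = 0 := by
        refine int_strong_ind lhat (fun n => t.2.1 n = 0 ∧ t.2.2 n = 0)
          (fun m hm => ⟨(ht.1 m hm).2.1, (ht.1 m hm).2.2⟩) ?_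
        intro n hn ih
        rcases lt_trichotomy n lam with h | h | h
        · exact hv n h
        · obtain ⟨e1, e2, e3⟩ := ht.2 lam hle
          have hS1 : ∑ k ∈ Finset.Icc 1 (lam - lhat), hcoef k *ᵥ t.2.1 (lam - k) = 0 :=
            Finset.sum_eq_zero fun k hk => by
              rw [Finset.mem_Icc] at hk
              rw [(ih (lam - k) (by omega)).1, Matrix.mulVec_zero]
          rw [jcmN_mulVec] at e3
          have h10 : t.2.1 lam = 0 := by
            have ha : t.2.1 lam 0 = 0 := by
              have h3 := congrFun e3 0
              simp only [Pi.add_apply, Matrix.cons_val_zero] at h3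
              linarith
            have hb : t.2.1 lam 1 = 0 := by
              have h3 := congrFun e3 1
              simp only [Pi.add_apply, Matrix.cons_val_one, Matrix.head_cons,
                add_zero, Matrix.cons_val_zero] at h3
              linarith
            funext i
            fin_cases i
            · exact ha
            · exact hb
          have h20 : t.2.2 lam = 0 := by
            rw [h10, hS1, Matrix.mulVec_zero, add_zero, add_zero] at e2
            have h4 : t.2.2 lam = (2:ℝ)⁻¹ • ((2:ℝ) • t.2.2 lam) := by
              rw [smul_smul]; norm_num
            rw [h4, e2, smul_zero]
          rw [h]; exact ⟨h10, h20⟩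
        · have hne : n ≠ lam := by omega
          obtain ⟨e1, e2, e3⟩ := ht.2 n hn
          have hS2 : ∑ k ∈ Finset.Icc 1 (n - lhat), hcoef k *ᵥ t.2.2 (n - k) = 0 :=
            Finset.sum_eq_zero fun k hk => by
              rw [Finset.mem_Icc] at hk
              rw [(ih (n - k) (by omega)).2, Matrix.mulVec_zero]
          have hS1 : ∑ k ∈ Finset.Icc 1 (n - lhat), hcoef k *ᵥ t.2.1 (n - k) = 0 :=
            Finset.sum_eq_zero fun k hk => by
              rw [Finset.mem_Icc] at hk
              rw [(ih (n - k) (by omega)).1, Matrix.mulVec_zero]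
          rw [hS2, add_zero] at e1
          have hx : t.2.2 n = 0 := by
            have h5 := (jcm_inv_key lam n hne _ _).mp e1
            rwa [Matrix.mulVec_zero] at h5
          rw [hS1, add_zero, hx, smul_zero, zero_add] at e2
          have hy : t.2.1 n = 0 := by
            have h5 := (jcm_inv_key lam n hne _ _).mp e2
            rwa [Matrix.mulVec_zero] at h5
          exact ⟨hy, hx⟩
      exact ⟨funext fun n => (key n).1, funext fun n => (key n).2⟩
end

section
/- No-logs condition for 2×2 Fuchsian systems with diagonal integer indicial matrix (condition (B.17)): Let λ₁ ≤ λ₂ be integers, let ℓ̂ ∈ ℤ with ℓ̂ ≤ λ₁, let D := diag(−λ₁, −λ₂), let (h_k)_{k≥1} be a sequence of real 2×2 matrices and (g_n)_{n≥ℓ̂} a sequence of vectors in ℝ². Suppose the ℝ²-valued sequences (f⁰_n, f¹_n, f²_n)_{n≥ℓ̂} satisfy, for all n ≥ ℓ̂ (with coefficients of index < ℓ̂ set to zero): (n·Id + D)·f²_n + Σ_{k=1}^{n−ℓ̂} h_k·f²_{n−k} = 0; 2·f²_n + (n·Id + D)·f¹_n + Σ_{k=1}^{n−ℓ̂} h_k·f¹_{n−k}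 = 0; and f¹_n + (n·Id + D)·f⁰_n + Σ_{k=1}^{n−ℓ̂} h_k·f⁰_{n−k} = g_n. Then (f¹_n) and (f²_n) vanish identically if and only if, for i = 1, 2, the i-th component of Σ_{k=1}^{λᵢ−ℓ̂} h_k·f⁰_{λᵢ−k} equals the i-th component of g_{λᵢ}. -/
open Matrix

private lemma scalar_step (n lam : ℤ) (a b c S gval : ℝ)
    (e1 : ((n : ℝ) - (lam : ℝ)) * b = 0)
    (e2 : 2 * b + ((n : ℝ) - (lam : ℝ)) * a = 0)
    (e3 : a + ((n : ℝ) - (lam : ℝ)) * c + S = gval)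
    (hc : n = lam → S = gval) : a = 0 ∧ b = 0 := by
  by_cases h : n = lam
  · have hS := hc h
    subst h
    simp only [sub_self, zero_mul, add_zero, mul_zero, zero_add] at e1 e2 e3
    constructor <;> linarith
  · have hne : ((n : ℝ) - (lam : ℝ)) ≠ 0 := by
      have : (n : ℝ) ≠ (lam : ℝ) := by exact_mod_cast h
      exact sub_ne_zero.mpr this
    have hb : b = 0 := by
      rcases mul_eq_zero.mp e1 with h' | h'
      · exact absurd h' hne
      · exact h'
    refine ⟨?_, hb⟩
    rw [hb] at e2
    have : ((n : ℝ) - (lam : ℝ)) * a = 0 := by linarith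
    rcases mul_eq_zero.mp this with h' | h'
    · exact absurd h' hne
    · exact h'

private lemma mv_apply (l1 l2 n : ℤ) (v : Fin 2 → ℝ) :
    ((((n : ℝ) • (1 : Matrix (Fin 2) (Fin 2) ℝ)
        + Matrix.diagonal ![-(l1 : ℝ), -(l2 : ℝ)]) *ᵥ v) 0
        = ((n : ℝ) - (l1 : ℝ)) * v 0) ∧
    ((((n : ℝ) • (1 : Matrix (Fin 2) (Fin 2) ℝ)
        + Matrix.diagonal ![-(l1 : ℝ), -(l2 : ℝ)]) *ᵥ v) 1
        = ((n : ℝ) - (l2 : ℝ)) * v 1) := by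
  constructor <;>
  · simp [Matrix.mulVec, Matrix.one_apply, Fin.sum_univ_two, Matrix.diagonal,
      dotProduct]
    tauto

/-- No-logs condition (B.17) for 2×2 Fuchsian systems with diagonal integer indicial
matrix `D = diag(−λ₁,−λ₂)`, `λ₁ ≤ λ₂`: if the sequences `(f⁰_n, f¹_n, f²_n)` satisfy the
recursions obtained from the ansatz `f ~ Σ f⁰_n xⁿ + log x·Σ f¹_n xⁿ + log²x·Σ f²_n xⁿ`,
then `(f¹)` and `(f²)` vanish identically iff for `i = 1,2` the `i`-th component of
`Σ_{k=1}^{λᵢ−ℓ̂} h_k·f⁰_{λᵢ−k}` equals the `i`-th component of `g_{λᵢ}`. -/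
theorem diagonal_no_logs_condition
    (l1 l2 lhat : ℤ) (h12 : l1 ≤ l2) (hle : lhat ≤ l1)
    (hcoef : ℤ → Matrix (Fin 2) (Fin 2) ℝ) (g : ℤ → Fin 2 → ℝ)
    (f0 f1 f2 : ℤ → Fin 2 → ℝ)
    (hzero : ∀ m : ℤ, m < lhat → f0 m = 0 ∧ f1 m = 0 ∧ f2 m = 0)
    (hrec : ∀ n : ℤ, lhat ≤ n →
      (((n : ℝ) • (1 : Matrix (Fin 2) (Fin 2) ℝ)
            + Matrix.diagonal ![-(l1 : ℝ), -(l2 : ℝ)]) *ᵥ f2 n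
          + ∑ k ∈ Finset.Icc 1 (n - lhat), hcoef k *ᵥ f2 (n - k) = 0) ∧
      ((2 : ℝ) • f2 n
          + ((n : ℝ) • (1 : Matrix (Fin 2) (Fin 2) ℝ)
            + Matrix.diagonal ![-(l1 : ℝ), -(l2 : ℝ)]) *ᵥ f1 n
          + ∑ k ∈ Finset.Icc 1 (n - lhat), hcoef k *ᵥ f1 (n - k) = 0) ∧
      (f1 n
          + ((n : ℝ) • (1 : Matrix (Fin 2) (Fin 2) ℝ)
            + Matrix.diagonal ![-(l1 : ℝ), -(l2 : ℝ)]) *ᵥ f0 n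
          + ∑ k ∈ Finset.Icc 1 (n - lhat), hcoef k *ᵥ f0 (n - k) = g n)) :
    ((∀ n : ℤ, f1 n = 0) ∧ (∀ n : ℤ, f2 n = 0)) ↔
      ((∑ k ∈ Finset.Icc 1 (l1 - lhat), hcoef k *ᵥ f0 (l1 - k)) 0 = g l1 0 ∧
        (∑ k ∈ Finset.Icc 1 (l2 - lhat), hcoef k *ᵥ f0 (l2 - k)) 1 = g l2 1) := by
  constructor
  · rintro ⟨H1, _⟩
    constructor
    · obtain ⟨_, _, E3⟩ := hrec l1 hle
      have e := congrFun E3 0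
      simp only [Pi.add_apply, H1 l1, Pi.zero_apply, (mv_apply l1 l2 l1 (f0 l1)).1,
        sub_self, zero_mul, zero_add] at e
      exact e
    · obtain ⟨_, _, E3⟩ := hrec l2 (hle.trans h12)
      have e := congrFun E3 1
      simp only [Pi.add_apply, H1 l2, Pi.zero_apply, (mv_apply l1 l2 l2 (f0 l2)).2,
        sub_self, zero_mul, zero_add] at e
      exact e
  · rintro ⟨hc1, hc2⟩
    have step : ∀ n : ℤ, lhat ≤ n → (∀ m : ℤ, m < n → f1 m = 0 ∧ f2 m = 0) →
        f1 n = 0 ∧ f2 n = 0 := by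
      intro n hn hIH
      obtain ⟨E1, E2, E3⟩ := hrec n hn
      have hsum2 : ∑ k ∈ Finset.Icc 1 (n - lhat), hcoef k *ᵥ f2 (n - k) = 0 := by
        refine Finset.sum_eq_zero fun k hk => ?_
        have hk1 : 1 ≤ k := (Finset.mem_Icc.mp hk).1
        rw [(hIH (n - k) (by omega)).2, Matrix.mulVec_zero]
      have hsum1 : ∑ k ∈ Finset.Icc 1 (n - lhat), hcoef k *ᵥ f1 (n - k) = 0 := by
        refine Finset.sum_eq_zero fun k hk => ?_
        have hk1 : 1 ≤ k := (Finset.mem_Icc.mp hk).1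
        rw [(hIH (n - k) (by omega)).1, Matrix.mulVec_zero]
      rw [hsum2, add_zero] at E1
      rw [hsum1, add_zero] at E2
      have e1a := congrFun E1 0
      have e1b := congrFun E1 1
      have e2a := congrFun E2 0
      have e2b := congrFun E2 1
      have e3a := congrFun E3 0
      have e3b := congrFun E3 1
      simp only [Pi.add_apply, Pi.zero_apply, Pi.smul_apply, smul_eq_mul,
        (mv_apply l1 l2 n (f2 n)).1, (mv_apply l1 l2 n (f2 n)).2,
        (mv_apply l1 l2 n (f1 n)).1, (mv_apply l1 l2 n (f1 n)).2,
        (mv_apply l1 l2 n (f0 n)).1, (mv_apply l1 l2 n (f0 n)).2] at e1a e1b e2a e2b e3a e3b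
      have hA := scalar_step n l1 (f1 n 0) (f2 n 0) (f0 n 0)
        ((∑ k ∈ Finset.Icc 1 (n - lhat), hcoef k *ᵥ f0 (n - k)) 0) (g n 0)
        e1a e2a e3a (by intro h; subst h; exact hc1)
      have hB := scalar_step n l2 (f1 n 1) (f2 n 1) (f0 n 1)
        ((∑ k ∈ Finset.Icc 1 (n - lhat), hcoef k *ᵥ f0 (n - k)) 1) (g n 1)
        e1b e2b e3b (by intro h; subst h; exact hc2)
      constructor <;> funext i <;> fin_cases i
      · exact hA.1
      · exact hB.1
      · exact hA.2
      · exact hB.2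
    have key : ∀ N : ℕ, ∀ n : ℤ, n < lhat + N → f1 n = 0 ∧ f2 n = 0 := by
      intro N
      induction N with
      | zero =>
        intro n hn
        have h := hzero n (by omega)
        exact ⟨h.2.1, h.2.2⟩
      | succ N IH =>
        intro n hn
        rcases lt_or_ge n lhat with h | h
        · have h' := hzero n h
          exact ⟨h'.2.1, h'.2.2⟩
        · by_cases h2 : n < lhat + N
          · exact IH n h2
          · exact step n h (fun m hm => IH m (by omega))
    exact ⟨fun n => (key ((n - lhat).toNat + 1) n (by omega)).1,
      fun n => (key ((n - lhat).toNat + 1) n (by omega)).2⟩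
end
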